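/- arXiv:1704.07428 — 8 statements merged into one kernel-verified Lean document; each statement's English description precedes it below -/
import Mathlib

section
/- Let G be a group and S a finite symmetric subset of G (i.e., s ∈ S implies s⁻¹ ∈ S). Suppose there exist a real number k and a function L : G × S → ℝ such that for every g ∈ G and s ∈ S one has L(g,s) > 0, L(g,s) · L(g·s, s⁻¹) = 1, and Σ_{s∈S} L(g,s) ≤ k. Then for every square-summable function h : G → ℝ one has Σ_{g∈G} Σ_{s∈S} (h(g) − h(g·s)) · h(g) ≥ (|S| − k) · Σ_{g∈G} h(g)². (In particular, the bottom of the combinatorial spectrum μ₀(G,S) is at least |S| − k.) -/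
/-- Weighted AM–GM: if `t * u = 1` with `t > 0`, then `a * b ≤ (t*a² + u*b²)/2`. -/
lemma gg_amgm (t u a b : ℝ) (ht : 0 < t) (htu : t * u = 1) :
    a * b ≤ (t * a ^ 2 + u * b ^ 2) / 2 := by
  have key : 2 * t * (a * b) ≤ t * (t * a ^ 2 + u * b ^ 2) := by
    nlinarith [sq_nonneg (t * a - b), sq_nonneg b]
  nlinarith [key, ht]

set_option maxHeartbeats 1000000 in
/-- **Gabber–Galil lemma** (Proposition B, prop:GG). -/
theorem gabber_galil {G : Type*} [Group G] (S : Finset G)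
    (hsym : ∀ s ∈ S, s⁻¹ ∈ S) (k : ℝ) (L : G → G → ℝ)
    (hpos : ∀ g : G, ∀ s ∈ S, 0 < L g s)
    (hinv : ∀ g : G, ∀ s ∈ S, L g s * L (g * s) s⁻¹ = 1)
    (hbound : ∀ g : G, ∑ s ∈ S, L g s ≤ k)
    (h : G → ℝ) (hh : Summable fun g => h g ^ 2) :
    ∑' g : G, ∑ s ∈ S, (h g - h (g * s)) * h g ≥
      ((S.card : ℝ) - k) * ∑' g : G, h g ^ 2 := by
  classical
  set T := ∑' g : G, h g ^ 2 with hTdef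
  have hT0 : 0 ≤ T := tsum_nonneg fun g => sq_nonneg _
  have hLle : ∀ g : G, ∀ s ∈ S, L g s ≤ k := by
    intro g s hs
    calc L g s ≤ ∑ t ∈ S, L g t :=
          Finset.single_le_sum (fun t ht => (hpos g t ht).le) hs
      _ ≤ k := hbound g
  have hsq : ∀ s : G, Summable fun g => h (g * s) ^ 2 := fun s =>
    ((Equiv.mulRight s).summable_iff).2 hh
  have hcross : ∀ s : G, Summable fun g => h g * h (g * s) := by
    intro s
    apply Summable.of_abs
    refine Summable.of_nonneg_of_le (fun g => abs_nonneg _) (fun g => ?_)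
      (hh.add (hsq s))
    have h1 : |h g * h (g * s)| = |h g| * |h (g * s)| := abs_mul _ _
    nlinarith [sq_nonneg (|h g| - |h (g * s)|), abs_nonneg (h g),
      abs_nonneg (h (g * s)), sq_abs (h g), sq_abs (h (g * s))]
  have hB : ∀ s ∈ S, Summable fun g => L g s * h g ^ 2 := by
    intro s hs
    refine Summable.of_nonneg_of_le
      (fun g => mul_nonneg (hpos g s hs).le (sq_nonneg _))
      (fun g => mul_le_mul_of_nonneg_right (hLle g s hs) (sq_nonneg _))
      (hh.mul_left k)
  have hC : ∀ s ∈ S, Summable fun g => L (g * s) s⁻¹ * h (g * s) ^ 2 := fun s hs =>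
    ((Equiv.mulRight s).summable_iff).2 (hB s⁻¹ (hsym s hs))
  -- abbreviations
  set A : G → ℝ := fun s => ∑' g : G, h g * h (g * s) with hAdef
  set B : G → ℝ := fun s => ∑' g : G, L g s * h g ^ 2 with hBdef
  -- Key bound: A s ≤ (B s + B s⁻¹)/2 for s ∈ S
  have hAle : ∀ s ∈ S, A s ≤ (B s + B s⁻¹) / 2 := by
    intro s hs
    have step1 : A s ≤ ∑' g : G, (L g s * h g ^ 2 + L (g * s) s⁻¹ * h (g * s) ^ 2) / 2 := by
      refine Summable.tsum_le_tsum (fun g => ?_) (hcross s) (((hB s hs).add (hC s hs)).div_const 2)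
      exact gg_amgm _ _ _ _ (hpos g s hs) (hinv g s hs)
    have step2 : (∑' g : G, (L g s * h g ^ 2 + L (g * s) s⁻¹ * h (g * s) ^ 2) / 2)
        = (B s + B s⁻¹) / 2 := by
      have hre : (∑' g : G, L (g * s) s⁻¹ * h (g * s) ^ 2) = B s⁻¹ :=
        (Equiv.mulRight s).tsum_eq (fun g => L g s⁻¹ * h g ^ 2)
      rw [tsum_div_const, Summable.tsum_add (hB s hs) (hC s hs), hre]
    linarith [step1, step2.le, step2.ge]
  -- ∑ s ∈ S, B s⁻¹ = ∑ s ∈ S, B s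
  have hBsymm : ∑ s ∈ S, B s⁻¹ = ∑ s ∈ S, B s := by
    refine Finset.sum_equiv (Equiv.inv G) (fun i => ?_) (fun i hi => ?_)
    · constructor
      · exact fun hi => hsym i hi
      · intro hi
        simpa using hsym _ hi
    · simp
  -- ∑ s ∈ S, B s ≤ k * T
  have hBsum : ∑ s ∈ S, B s ≤ k * T := by
    have hswap : ∑ s ∈ S, B s = ∑' g : G, ∑ s ∈ S, L g s * h g ^ 2 :=
      (Summable.tsum_finsetSum hB).symm
    rw [hswap]
    have hsummable : Summable fun g => ∑ s ∈ S, L g s * h g ^ 2 :=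
      summable_sum hB
    calc ∑' g : G, ∑ s ∈ S, L g s * h g ^ 2
        ≤ ∑' g : G, k * h g ^ 2 := by
          refine Summable.tsum_le_tsum (fun g => ?_) hsummable (hh.mul_left k)
          rw [← Finset.sum_mul]
          exact mul_le_mul_of_nonneg_right (hbound g) (sq_nonneg _)
      _ = k * T := tsum_mul_left
  -- hence ∑ s ∈ S, A s ≤ k * T
  have hAsum : ∑ s ∈ S, A s ≤ k * T := by
    calc ∑ s ∈ S, A s ≤ ∑ s ∈ S, (B s + B s⁻¹) / 2 :=
          Finset.sum_le_sum hAle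
      _ = ((∑ s ∈ S, B s) + ∑ s ∈ S, B s⁻¹) / 2 := by
          rw [← Finset.sum_add_distrib, Finset.sum_div]
      _ = ∑ s ∈ S, B s := by rw [hBsymm]; ring
      _ ≤ k * T := hBsum
  -- rewrite LHS
  have hsummand : ∀ s ∈ S, Summable fun g => (h g - h (g * s)) * h g := by
    intro s _
    have : (fun g => (h g - h (g * s)) * h g) = fun g => h g ^ 2 - h g * h (g * s) := by
      funext g; ring
    rw [this]
    exact hh.sub (hcross s)
  have hLHS : (∑' g : G, ∑ s ∈ S, (h g - h (g * s)) * h g)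
      = (S.card : ℝ) * T - ∑ s ∈ S, A s := by
    rw [Summable.tsum_finsetSum hsummand]
    have heach : ∀ s ∈ S, (∑' g : G, (h g - h (g * s)) * h g) = T - A s := by
      intro s _
      have h1 : (fun g => (h g - h (g * s)) * h g)
          = fun g => h g ^ 2 - h g * h (g * s) := by funext g; ring
      rw [h1, Summable.tsum_sub hh (hcross s)]
    rw [Finset.sum_congr rfl heach, Finset.sum_sub_distrib, Finset.sum_const,
      nsmul_eq_mul]
  rw [hLHS, ge_iff_le, sub_mul]
  linarith [hAsum]
end

section
/- Let G be a group and S a finite symmetric generating set of G with 1 ∉ S. For g ∈ G let |g| denote the word norm of g with respect to S (the least n such that g is a product of n elements of S), and set S⁺(g) = {s ∈ S : |g·s| = |g| + 1} and S⁻(g) = {s ∈ S : |g·s| = |g| − 1}. Assume S⁺(g) ∪ S⁻(g) = S for every g ∈ G. Let K ∈ ℕ, let t : G → {0,…,K} be any function, let c : {0,…,K} → ℝ take only positive values, and let k₀ ∈ ℝ be such that for every g ∈ G one has Σ_{s∈S⁺(g)} c(t(g·s)) + |S⁻(g)| / c(t(g)) ≤ k₀. Then for every square-summable h : G → ℝ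 one has Σ_{g∈G} Σ_{s∈S} (h(g) − h(g·s)) · h(g) ≥ (|S| − k₀) · Σ_{g∈G} h(g)²; in particular μ₀(G,S) ≥ |S| − k₀. -/
open scoped Classical

/-- The word norm of `g` with respect to the generating set `S`: the least `n`
such that `g` is a product of `n` elements of `S`. -/
noncomputable def wordNorm {G : Type*} [Group G] (S : Finset G) (g : G) : ℕ :=
  sInf {n : ℕ | ∃ l : List G, (∀ x ∈ l, x ∈ S) ∧ l.length = n ∧ l.prod = g}

/-- `S⁺(g)`: the generators `s` with `|g·s| = |g| + 1`. -/
noncomputable def Splus {G : Type*} [Group G] (S : Finset G) (g : G) : Finset G :=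
  S.filter fun s => wordNorm S (g * s) = wordNorm S g + 1

/-- `S⁻(g)`: the generators `s` with `|g·s| = |g| − 1`. -/
noncomputable def Sminus {G : Type*} [Group G] (S : Finset G) (g : G) : Finset G :=
  S.filter fun s => wordNorm S (g * s) + 1 = wordNorm S g

private lemma amgm_aux (a x y : ℝ) (ha : 0 < a) : x * y ≤ (a * x ^ 2 + a⁻¹ * y ^ 2) / 2 := by
  have h2 : 0 ≤ (a * x - y) ^ 2 := sq_nonneg _
  have h3 : a * a⁻¹ = 1 := mul_inv_cancel₀ ha.ne'
  nlinarith [mul_pos ha ha, sq_nonneg (a * x - y)]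

/-- Corollary of the Gabber–Galil lemma via compatible type functions (coro:GG). -/
theorem mu0_lower_bound_of_type_function {G : Type*} [Group G] (S : Finset G)
    (hsym : ∀ s ∈ S, s⁻¹ ∈ S) (hgen : Subgroup.closure (S : Set G) = ⊤)
    (hone : (1 : G) ∉ S)
    (hsplit : ∀ g : G, Splus S g ∪ Sminus S g = S)
    (K : ℕ) (t : G → Fin (K + 1)) (c : Fin (K + 1) → ℝ)
    (hc : ∀ i, 0 < c i) (k₀ : ℝ)
    (hk₀ : ∀ g : G,
      (∑ s ∈ Splus S g, c (t (g * s))) + (Sminus S g).card / c (t g) ≤ k₀)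
    (h : G → ℝ) (hh : Summable fun g => h g ^ 2) :
    ∑' g : G, ∑ s ∈ S, (h g - h (g * s)) * h g ≥
      ((S.card : ℝ) - k₀) * ∑' g : G, h g ^ 2 := by
  classical
  -- bounds on c
  set C := ∑ i, c i with hCdef
  set D := ∑ i, (c i)⁻¹ with hDdef
  have hC0 : 0 ≤ C := Finset.sum_nonneg fun i _ => (hc i).le
  have hD0 : 0 ≤ D := Finset.sum_nonneg fun i _ => (inv_nonneg.mpr (hc i).le)
  have hcC : ∀ j, c j ≤ C := fun j =>
    Finset.single_le_sum (fun i _ => (hc i).le) (Finset.mem_univ j)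
  have hcD : ∀ j, (c j)⁻¹ ≤ D := fun j =>
    Finset.single_le_sum (fun i _ => inv_nonneg.mpr (hc i).le) (Finset.mem_univ j)
  -- shifted summability
  have hshift : ∀ s : G, Summable fun g => h (g * s) ^ 2 := by
    intro s
    have := (Equiv.mulRight s).summable_iff (f := fun g => h g ^ 2)
    exact this.mpr hh
  have hprod : ∀ s : G, Summable fun g => h g * h (g * s) := by
    intro s
    have habs : Summable fun g => |h g * h (g * s)| := by
      refine Summable.of_nonneg_of_le (fun g => abs_nonneg _)
        (fun g => ?_) ((hh.add (hshift s)).div_const 2)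
      have := abs_mul (h g) (h (g * s))
      nlinarith [sq_nonneg (|h g| - |h (g * s)|), sq_abs (h g), sq_abs (h (g * s)),
        abs_nonneg (h g), abs_nonneg (h (g * s)), abs_mul (h g) (h (g * s)),
        abs_mul_abs_self (h g)]
    exact habs.of_abs
  -- the four auxiliary families
  set f1 : G → G → ℝ := fun s g => if s ∈ Splus S g then c (t (g * s)) * h g ^ 2 else 0
    with hf1def
  set f2 : G → G → ℝ := fun s g => if s ∈ Splus S g then (c (t (g * s)))⁻¹ * h (g * s) ^ 2 else 0
    with hf2def
  set f3 : G → G → ℝ := fun s g => if s ∈ Sminus S g then (c (t g))⁻¹ * h g ^ 2 else 0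
    with hf3def
  set f4 : G → G → ℝ := fun s g => if s ∈ Sminus S g then c (t g) * h (g * s) ^ 2 else 0
    with hf4def
  have hf1nn : ∀ s g, 0 ≤ f1 s g := by
    intro s g; simp only [hf1def]; split
    · exact mul_nonneg (hc _).le (sq_nonneg _)
    · exact le_rfl
  have hf2nn : ∀ s g, 0 ≤ f2 s g := by
    intro s g; simp only [hf2def]; split
    · exact mul_nonneg (inv_nonneg.mpr (hc _).le) (sq_nonneg _)
    · exact le_rfl
  have hf3nn : ∀ s g, 0 ≤ f3 s g := by
    intro s g; simp only [hf3def]; split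
    · exact mul_nonneg (inv_nonneg.mpr (hc _).le) (sq_nonneg _)
    · exact le_rfl
  have hf4nn : ∀ s g, 0 ≤ f4 s g := by
    intro s g; simp only [hf4def]; split
    · exact mul_nonneg (hc _).le (sq_nonneg _)
    · exact le_rfl
  have Sf1 : ∀ s : G, Summable (f1 s) := by
    intro s
    refine Summable.of_nonneg_of_le (hf1nn s) (fun g => ?_) (hh.mul_left C)
    simp only [hf1def]; split
    · exact mul_le_mul_of_nonneg_right (hcC _) (sq_nonneg _)
    · positivity
  have Sf2 : ∀ s : G, Summable (f2 s) := by
    intro s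
    refine Summable.of_nonneg_of_le (hf2nn s) (fun g => ?_) ((hshift s).mul_left D)
    simp only [hf2def]; split
    · exact mul_le_mul_of_nonneg_right (hcD _) (sq_nonneg _)
    · positivity
  have Sf3 : ∀ s : G, Summable (f3 s) := by
    intro s
    refine Summable.of_nonneg_of_le (hf3nn s) (fun g => ?_) (hh.mul_left D)
    simp only [hf3def]; split
    · exact mul_le_mul_of_nonneg_right (hcD _) (sq_nonneg _)
    · positivity
  have Sf4 : ∀ s : G, Summable (f4 s) := by
    intro s
    refine Summable.of_nonneg_of_le (hf4nn s) (fun g => ?_) ((hshift s).mul_left C)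
    simp only [hf4def]; split
    · exact mul_le_mul_of_nonneg_right (hcC _) (sq_nonneg _)
    · positivity
  -- disjointness of Splus and Sminus
  have hdisj : ∀ g : G, ∀ s : G, s ∈ Splus S g → s ∉ Sminus S g := by
    intro g s hp hm
    simp only [Splus, Finset.mem_filter] at hp
    simp only [Sminus, Finset.mem_filter] at hm
    omega
  -- pointwise AM-GM bound
  have key_pt : ∀ s ∈ S, ∀ g : G,
      h g * h (g * s) ≤ (f1 s g + f2 s g + f3 s g + f4 s g) / 2 := by
    intro s hs g
    have hsS : s ∈ Splus S g ∪ Sminus S g := (hsplit g).symm ▸ hs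
    rcases Finset.mem_union.mp hsS with hp | hm
    · have hnm : s ∉ Sminus S g := hdisj g s hp
      simp only [hf1def, hf2def, hf3def, hf4def, if_pos hp, if_neg hnm, add_zero]
      have := amgm_aux (c (t (g * s))) (h g) (h (g * s)) (hc _)
      linarith
    · have hnp : s ∉ Splus S g := fun hp => hdisj g s hp hm
      simp only [hf1def, hf2def, hf3def, hf4def, if_pos hm, if_neg hnp, zero_add]
      have := amgm_aux (c (t g))⁻¹ (h g) (h (g * s)) (inv_pos.mpr (hc _))
      rw [inv_inv] at this
      linarith
  -- membership reindexing lemmas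
  have hmem1 : ∀ s ∈ S, ∀ g : G, (s ∈ Splus S (g * s⁻¹) ↔ s⁻¹ ∈ Sminus S g) := by
    intro s hs g
    simp only [Splus, Sminus, Finset.mem_filter, inv_mul_cancel_right]
    constructor
    · rintro ⟨_, hw⟩; exact ⟨hsym s hs, hw.symm⟩
    · rintro ⟨_, hw⟩; exact ⟨hs, hw.symm⟩
  have hmem2 : ∀ s ∈ S, ∀ g : G, (s ∈ Sminus S (g * s⁻¹) ↔ s⁻¹ ∈ Splus S g) := by
    intro s hs g
    simp only [Splus, Sminus, Finset.mem_filter, inv_mul_cancel_right]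
    constructor
    · rintro ⟨_, hw⟩; exact ⟨hsym s hs, hw.symm⟩
    · rintro ⟨_, hw⟩; exact ⟨hs, hw.symm⟩
  -- tsum names
  set T1 : G → ℝ := fun s => ∑' g : G, f1 s g with hT1
  set T2 : G → ℝ := fun s => ∑' g : G, f2 s g with hT2
  set T3 : G → ℝ := fun s => ∑' g : G, f3 s g with hT3
  set T4 : G → ℝ := fun s => ∑' g : G, f4 s g with hT4
  -- reindexing identities
  have R2 : ∀ s ∈ S, T2 s = T3 s⁻¹ := by
    intro s hs
    have e : ∀ g : G, f2 s (g * s⁻¹) = f3 s⁻¹ g := by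
      intro g
      simp only [hf2def, hf3def, inv_mul_cancel_right]
      by_cases hmem : s⁻¹ ∈ Sminus S g
      · rw [if_pos ((hmem1 s hs g).mpr hmem), if_pos hmem]
      · rw [if_neg (fun hp => hmem ((hmem1 s hs g).mp hp)), if_neg hmem]
    calc T2 s = ∑' g : G, f2 s ((Equiv.mulRight s⁻¹) g) :=
          ((Equiv.mulRight s⁻¹).tsum_eq (f2 s)).symm
      _ = ∑' g : G, f3 s⁻¹ g := by
          apply tsum_congr; intro g
          simpa using e g
      _ = T3 s⁻¹ := rfl
  have R4 : ∀ s ∈ S, T4 s = T1 s⁻¹ := by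
    intro s hs
    have e : ∀ g : G, f4 s (g * s⁻¹) = f1 s⁻¹ g := by
      intro g
      simp only [hf4def, hf1def, inv_mul_cancel_right]
      by_cases hmem : s⁻¹ ∈ Splus S g
      · rw [if_pos ((hmem2 s hs g).mpr hmem), if_pos hmem]
      · rw [if_neg (fun hp => hmem ((hmem2 s hs g).mp hp)), if_neg hmem]
    calc T4 s = ∑' g : G, f4 s ((Equiv.mulRight s⁻¹) g) :=
          ((Equiv.mulRight s⁻¹).tsum_eq (f4 s)).symm
      _ = ∑' g : G, f1 s⁻¹ g := by
          apply tsum_congr; intro g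
          simpa using e g
      _ = T1 s⁻¹ := rfl
  have sumR2 : ∑ s ∈ S, T2 s = ∑ s ∈ S, T3 s := by
    rw [Finset.sum_congr rfl R2]
    exact Finset.sum_nbij' (fun s => s⁻¹) (fun s => s⁻¹)
      (fun s hs => hsym s hs) (fun s hs => hsym s hs)
      (fun s _ => inv_inv s) (fun s _ => inv_inv s) (fun s _ => rfl)
  have sumR4 : ∑ s ∈ S, T4 s = ∑ s ∈ S, T1 s := by
    rw [Finset.sum_congr rfl R4]
    exact Finset.sum_nbij' (fun s => s⁻¹) (fun s => s⁻¹)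
      (fun s hs => hsym s hs) (fun s hs => hsym s hs)
      (fun s _ => inv_inv s) (fun s _ => inv_inv s) (fun s _ => rfl)
  -- the combined per-g function
  set Φ : G → ℝ := fun g =>
    ((∑ s ∈ Splus S g, c (t (g * s))) + (Sminus S g).card / c (t g)) * h g ^ 2 with hΦdef
  have hΦ_eq : ∀ g : G, ∑ s ∈ S, (f1 s g + f3 s g) = Φ g := by
    intro g
    have e1 : ∑ s ∈ S, f1 s g = ∑ s ∈ Splus S g, c (t (g * s)) * h g ^ 2 := by
      have hsub : S ∩ Splus S g = Splus S g :=
        Finset.inter_eq_right.mpr (Finset.filter_subset _ _)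
      rw [Finset.sum_ite_mem, hsub]
    have e3 : ∑ s ∈ S, f3 s g = (Sminus S g).card * ((c (t g))⁻¹ * h g ^ 2) := by
      have hsub : S ∩ Sminus S g = Sminus S g :=
        Finset.inter_eq_right.mpr (Finset.filter_subset _ _)
      rw [Finset.sum_ite_mem, hsub, Finset.sum_const, nsmul_eq_mul]
    rw [Finset.sum_add_distrib, e1, e3, hΦdef, ← Finset.sum_mul]
    field_simp
  have hΦnn : ∀ g, 0 ≤ Φ g := by
    intro g
    rw [← hΦ_eq g]
    exact Finset.sum_nonneg fun s _ => add_nonneg (hf1nn s g) (hf3nn s g)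
  have hΦle : ∀ g, Φ g ≤ k₀ * h g ^ 2 := fun g =>
    mul_le_mul_of_nonneg_right (hk₀ g) (sq_nonneg _)
  have hΦsum : Summable Φ :=
    Summable.of_nonneg_of_le hΦnn hΦle (hh.mul_left k₀)
  -- the key estimate
  have key : ∑' g : G, ∑ s ∈ S, h g * h (g * s) ≤ k₀ * ∑' g : G, h g ^ 2 := by
    have swap1 : ∑' g : G, ∑ s ∈ S, h g * h (g * s)
        = ∑ s ∈ S, ∑' g : G, h g * h (g * s) :=
      Summable.tsum_finsetSum fun s _ => hprod s
    have step1 : ∀ s ∈ S, (∑' g : G, h g * h (g * s))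
        ≤ (T1 s + T2 s + T3 s + T4 s) / 2 := by
      intro s hs
      have hsummable : Summable fun g => (f1 s g + f2 s g + f3 s g + f4 s g) / 2 :=
        ((((Sf1 s).add (Sf2 s)).add (Sf3 s)).add (Sf4 s)).div_const 2
      calc (∑' g : G, h g * h (g * s))
          ≤ ∑' g : G, (f1 s g + f2 s g + f3 s g + f4 s g) / 2 :=
            Summable.tsum_le_tsum (key_pt s hs) (hprod s) hsummable
        _ = (T1 s + T2 s + T3 s + T4 s) / 2 := by
            rw [tsum_div_const, Summable.tsum_add (((Sf1 s).add (Sf2 s)).add (Sf3 s)) (Sf4 s),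
              Summable.tsum_add ((Sf1 s).add (Sf2 s)) (Sf3 s), Summable.tsum_add (Sf1 s) (Sf2 s)]
    calc ∑' g : G, ∑ s ∈ S, h g * h (g * s)
        = ∑ s ∈ S, ∑' g : G, h g * h (g * s) := swap1
      _ ≤ ∑ s ∈ S, (T1 s + T2 s + T3 s + T4 s) / 2 := Finset.sum_le_sum step1
      _ = ((∑ s ∈ S, T1 s) + (∑ s ∈ S, T2 s) + (∑ s ∈ S, T3 s) + (∑ s ∈ S, T4 s)) / 2 := by
          rw [← Finset.sum_div]
          congr 1
          rw [Finset.sum_add_distrib, Finset.sum_add_distrib, Finset.sum_add_distrib]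
      _ = (∑ s ∈ S, T1 s) + (∑ s ∈ S, T3 s) := by rw [sumR2, sumR4]; ring
      _ = ∑ s ∈ S, (T1 s + T3 s) := (Finset.sum_add_distrib).symm
      _ = ∑ s ∈ S, ∑' g : G, (f1 s g + f3 s g) := by
          refine Finset.sum_congr rfl fun s _ => ?_
          rw [Summable.tsum_add (Sf1 s) (Sf3 s)]
      _ = ∑' g : G, ∑ s ∈ S, (f1 s g + f3 s g) :=
          (Summable.tsum_finsetSum fun s _ => (Sf1 s).add (Sf3 s)).symm
      _ = ∑' g : G, Φ g := tsum_congr hΦ_eq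
      _ ≤ ∑' g : G, k₀ * h g ^ 2 := Summable.tsum_le_tsum hΦle hΦsum (hh.mul_left k₀)
      _ = k₀ * ∑' g : G, h g ^ 2 := tsum_mul_left
  -- assemble
  have hP : Summable fun g => ∑ s ∈ S, h g * h (g * s) := summable_sum fun s _ => hprod s
  have hLrw : ∀ g : G, ∑ s ∈ S, (h g - h (g * s)) * h g
      = (S.card : ℝ) * h g ^ 2 - ∑ s ∈ S, h g * h (g * s) := by
    intro g
    simp only [sub_mul]
    rw [Finset.sum_sub_distrib, Finset.sum_const, nsmul_eq_mul]
    congr 1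
    · rw [sq]
    · exact Finset.sum_congr rfl fun s _ => mul_comm _ _
  calc ∑' g : G, ∑ s ∈ S, (h g - h (g * s)) * h g
      = ∑' g : G, ((S.card : ℝ) * h g ^ 2 - ∑ s ∈ S, h g * h (g * s)) :=
        tsum_congr hLrw
    _ = (S.card : ℝ) * (∑' g : G, h g ^ 2) - ∑' g : G, ∑ s ∈ S, h g * h (g * s) := by
        rw [Summable.tsum_sub (hh.mul_left _) hP, tsum_mul_left]
    _ ≥ (S.card : ℝ) * (∑' g : G, h g ^ 2) - k₀ * ∑' g : G, h g ^ 2 := by linarith [key]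
    _ = ((S.card : ℝ) - k₀) * ∑' g : G, h g ^ 2 := by ring
end

section
/- Let G be a group and A ⊆ G a subset closed under inversion. Let v and w be two distinct geodesic words over A that represent the same element of G. Then there exist words v₀, v₁, w₀, w₁, x over A such that v = v₀ ++ v₁ ++ x and w = w₀ ++ w₁ ++ x, the words v₁ and w₁ are nonempty, have the same length and represent the same element of G, and the concatenation v₁ ++ inv(w₁) is a primitive relator (in particular it has even length). -/
section Words

variable {G : Type*} [Group G]

/-- A word over `A` is a list all of whose entries lie in `A`. -/
def IsWordOver (A : Set G) (l : List G) : Prop := ∀ x ∈ l, x ∈ A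

/-- The word norm of `g` with respect to `A`. -/
noncomputable def wordNormOver (A : Set G) (g : G) : ℕ :=
  sInf {n : ℕ | ∃ l : List G, IsWordOver A l ∧ l.length = n ∧ l.prod = g}

/-- A word is geodesic (a "path") if its length equals the word norm of the
element it represents. -/
def IsGeodesicWord (A : Set G) (l : List G) : Prop :=
  IsWordOver A l ∧ l.length = wordNormOver A l.prod

/-- The formal inverse of a word: the reversed list of the inverses of the entries. -/
def formalInv (l : List G) : List G := (l.map fun x => x⁻¹).reverse

/-- `u` is a subword of `v` if it is a contiguous sublist of `v`. -/
def IsSubword (u v : List G) : Prop := ∃ p q : List G, v = p ++ u ++ q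

/-- A relator: a nonempty word over `A` representing the identity. -/
def IsRelator (A : Set G) (l : List G) : Prop :=
  IsWordOver A l ∧ l ≠ [] ∧ l.prod = 1

/-- A relator is primitive if no proper nonempty subword of it is a relator. -/
def IsPrimitiveRelator (A : Set G) (l : List G) : Prop :=
  IsRelator A l ∧ ∀ u : List G, IsSubword u l → u ≠ l → u ≠ [] → u.prod ≠ 1

end Words

section AuxLemmas

variable {G : Type*} [Group G] {A : Set G}

lemma wordNormOver_le {l : List G} (h : IsWordOver A l) :
    wordNormOver A l.prod ≤ l.length :=
  Nat.sInf_le ⟨l, h, rfl, rfl⟩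

lemma exists_min_word (g : G) (hne : ∃ l : List G, IsWordOver A l ∧ l.prod = g) :
    ∃ m : List G, IsWordOver A m ∧ m.length = wordNormOver A g ∧ m.prod = g := by
  have hS : {n : ℕ | ∃ l : List G, IsWordOver A l ∧ l.length = n ∧ l.prod = g}.Nonempty := by
    obtain ⟨l, hl, hp⟩ := hne
    exact ⟨l.length, l, hl, rfl, hp⟩
  exact Nat.sInf_mem hS

lemma subword_geodesic {v p u q : List G} (hv : IsGeodesicWord A v)
    (hd : v = p ++ u ++ q) : IsGeodesicWord A u := by
  have hword : IsWordOver A u := fun x hx => hv.1 x (by subst hd; simp [hx])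
  refine ⟨hword, le_antisymm ?_ (wordNormOver_le hword)⟩
  obtain ⟨m, hm, hml, hmp⟩ := exists_min_word (A := A) u.prod ⟨u, hword, rfl⟩
  by_contra hlt
  push_neg at hlt
  rw [← hml] at hlt
  have hword' : IsWordOver A (p ++ m ++ q) := by
    intro x hx
    simp only [List.mem_append] at hx
    rcases hx with (hx | hx) | hx
    · exact hv.1 x (by subst hd; simp [hx])
    · exact hm x hx
    · exact hv.1 x (by subst hd; simp [hx])
  have hprod' : (p ++ m ++ q).prod = v.prod := by
    subst hd; simp [List.prod_append, hmp]
  have h1 : wordNormOver A v.prod ≤ (p ++ m ++ q).length := by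
    rw [← hprod']; exact wordNormOver_le hword'
  have h2 : v.length = wordNormOver A v.prod := hv.2
  subst hd
  simp only [List.length_append] at h1 h2
  omega

lemma geodesic_prod_one {l : List G} (hl : IsGeodesicWord A l) (h1 : l.prod = 1) :
    l = [] := by
  have : wordNormOver A l.prod ≤ 0 := by
    rw [h1]
    exact Nat.sInf_le ⟨[], fun x hx => by simp at hx, rfl, by simp⟩
  have h2 := hl.2
  have h3 : l.length = 0 := by omega
  exact List.length_eq_zero_iff.mp h3

lemma formalInv_prod (l : List G) : (formalInv l).prod = l.prod⁻¹ := by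
  induction l with
  | nil => simp [formalInv]
  | cons a t ih => simp [formalInv, List.prod_append, mul_comm] at *; simp [ih]

lemma formalInv_append (a b : List G) :
    formalInv (a ++ b) = formalInv b ++ formalInv a := by
  simp [formalInv]

lemma formalInv_formalInv (l : List G) : formalInv (formalInv l) = l := by
  simp [formalInv, List.map_reverse, List.map_map, Function.comp]

lemma formalInv_length (l : List G) : (formalInv l).length = l.length := by
  simp [formalInv]

lemma formalInv_word (hA : ∀ a ∈ A, a⁻¹ ∈ A) {l : List G} (hl : IsWordOver A l) :
    IsWordOver A (formalInv l) := by
  intro x hx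
  simp only [formalInv, List.mem_reverse, List.mem_map] at hx
  obtain ⟨y, hy, rfl⟩ := hx
  exact hA y (hl y hy)

lemma formalInv_geodesic (hA : ∀ a ∈ A, a⁻¹ ∈ A) {l : List G}
    (hl : IsGeodesicWord A l) : IsGeodesicWord A (formalInv l) := by
  have hword := formalInv_word hA hl.1
  refine ⟨hword, le_antisymm ?_ (wordNormOver_le hword)⟩
  obtain ⟨m, hm, hml, hmp⟩ :=
    exists_min_word (A := A) (formalInv l).prod ⟨formalInv l, hword, rfl⟩
  have : wordNormOver A l.prod ≤ (formalInv m).length := by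
    have h1 : (formalInv m).prod = l.prod := by
      rw [formalInv_prod, hmp, formalInv_prod, inv_inv]
    rw [← h1]
    exact wordNormOver_le (formalInv_word hA hm)
  rw [formalInv_length] at this
  rw [formalInv_length, hl.2]
  omega

/-- A subword of a concatenation lies in the first part, the second part,
or straddles the junction. -/
lemma subword_of_append {v w p u q : List G} (h : v ++ w = p ++ u ++ q) :
    (∃ p' q', v = p' ++ u ++ q') ∨ (∃ p' q', w = p' ++ u ++ q') ∨
    (∃ a b, u = a ++ b ∧ a ≠ [] ∧ b ≠ [] ∧ (∃ p', v = p' ++ a) ∧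
      (∃ q', w = b ++ q')) := by
  rw [List.append_assoc] at h
  rcases List.append_eq_append_iff.mp h with ⟨a', _, ha2⟩ | ⟨c', hc1, hc2⟩
  · exact Or.inr (Or.inl ⟨a', q, by rw [ha2, List.append_assoc]⟩)
  · rcases List.append_eq_append_iff.mp hc2 with ⟨x, hx1, _⟩ | ⟨y, hy1, hy2⟩
    · exact Or.inl ⟨p, x, by rw [hc1, hx1, List.append_assoc]⟩
    · rcases eq_or_ne c' [] with rfl | hc'
      · exact Or.inr (Or.inl ⟨[], q, by simp [hy2, hy1]⟩)
      · rcases eq_or_ne y [] with rfl | hy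
        · exact Or.inl ⟨p, [], by simp [hc1, hy1]⟩
        · exact Or.inr (Or.inr ⟨c', y, hy1, hc', hy, ⟨p, hc1⟩, ⟨q, hy2⟩⟩)

end AuxLemmas

/-- Two distinct geodesic words representing the same group element differ,
after removing a common suffix, by a primitive relator (Lemma in Appendix B). -/
theorem geodesic_words_decomposition {G : Type*} [Group G] (A : Set G)
    (hA : ∀ a ∈ A, a⁻¹ ∈ A) (v w : List G)
    (hv : IsGeodesicWord A v) (hw : IsGeodesicWord A w)
    (hne : v ≠ w) (hprod : v.prod = w.prod) :
    ∃ v₀ v₁ w₀ w₁ x : List G,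
      v = v₀ ++ v₁ ++ x ∧ w = w₀ ++ w₁ ++ x ∧
      v₁ ≠ [] ∧ w₁ ≠ [] ∧ v₁.length = w₁.length ∧ v₁.prod = w₁.prod ∧
      IsPrimitiveRelator A (v₁ ++ formalInv w₁) ∧
      Even (v₁ ++ formalInv w₁).length := by
  classical
  set r : List G := v ++ formalInv w with hr
  have hrword : IsWordOver A r := by
    intro x hx
    rcases List.mem_append.mp hx with hx | hx
    · exact hv.1 x hx
    · exact formalInv_word hA hw.1 x hx
  have hrprod : r.prod = 1 := by
    simp [hr, List.prod_append, formalInv_prod, hprod]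
  have hrne : r ≠ [] := by
    intro h
    rcases List.append_eq_nil_iff.mp h with ⟨h1, h2⟩
    apply hne
    rw [h1]
    have := congrArg formalInv h2
    rw [formalInv_formalInv] at this
    simp [formalInv] at this
    exact this.symm
  -- set of lengths of nonempty subwords of r with product 1
  set S : Set ℕ :=
    {n | ∃ u : List G, IsSubword u r ∧ u ≠ [] ∧ u.prod = 1 ∧ u.length = n} with hS
  have hSne : S.Nonempty := ⟨r.length, r, ⟨[], [], by simp⟩, hrne, hrprod, rfl⟩
  obtain ⟨u, hsub, hune, hu1, hulen⟩ := Nat.sInf_mem hSne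
  obtain ⟨p, q, hpq⟩ := hsub
  have huword : IsWordOver A u := fun x hx => hrword x (by rw [hpq]; simp [hx])
  -- minimality gives primitivity
  have hprim : IsPrimitiveRelator A u := by
    refine ⟨⟨huword, hune, hu1⟩, ?_⟩
    intro s hssub hsnu hsne hs1
    obtain ⟨a, b, hab⟩ := hssub
    have hsubr : IsSubword s r :=
      ⟨p ++ a, b ++ q, by rw [hpq, hab]; simp [List.append_assoc]⟩
    have hle : sInf S ≤ s.length := Nat.sInf_le ⟨s, hsubr, hsne, hs1, rfl⟩
    have habne : a ≠ [] ∨ b ≠ [] := by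
      by_contra hcon
      push_neg at hcon
      apply hsnu
      rw [hab, hcon.1, hcon.2]; simp
    have : u.length = a.length + s.length + b.length := by
      simp only [hab, List.length_append]
    have ha0 : 0 < a.length + b.length := by
      rcases habne with h | h
      · have := List.length_pos_iff.mpr h; omega
      · have := List.length_pos_iff.mpr h; omega
    omega
  -- locate u within r = v ++ formalInv w
  rcases subword_of_append (show v ++ formalInv w = p ++ u ++ q from hpq) with ⟨p', q', hv'⟩ | ⟨p', q', hw'⟩ |
    ⟨a, b, huab, hane, hbne, ⟨v₀, hv0⟩, ⟨t, ht⟩⟩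
  · exact absurd (geodesic_prod_one (subword_geodesic hv hv') hu1) hune
  · exact absurd
      (geodesic_prod_one (subword_geodesic (formalInv_geodesic hA hw) hw') hu1) hune
  · -- the straddling case
    set w₁ : List G := formalInv b with hw1
    have hfib : formalInv w₁ = b := formalInv_formalInv b
    have hwdec : w = formalInv t ++ w₁ := by
      have := congrArg formalInv ht
      rwa [formalInv_formalInv, formalInv_append] at this
    have hprodab : a.prod * b.prod = 1 := by
      have h' : (a ++ b).prod = 1 := by rw [← huab]; exact hu1
      simpa [List.prod_append] using h'
    have hprods : a.prod = w₁.prod := by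
      rw [hw1, formalInv_prod]
      exact mul_eq_one_iff_eq_inv.mp hprodab
    have hageo : IsGeodesicWord A a :=
      subword_geodesic hv (p := v₀) (q := []) (by simp [hv0])
    have hw1geo : IsGeodesicWord A w₁ :=
      subword_geodesic hw (p := formalInv t) (q := []) (by rw [hwdec]; simp)
    have hlen : a.length = w₁.length := by
      rw [hageo.2, hw1geo.2, hprods]
    have hw1ne : w₁ ≠ [] := by
      intro h
      apply hbne
      have := congrArg formalInv h
      rwa [hw1, formalInv_formalInv] at this
    have hpr : IsPrimitiveRelator A (a ++ formalInv w₁) := by rwa [hfib, ← huab]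
    have hev : Even (a ++ formalInv w₁).length := by
      refine ⟨a.length, ?_⟩
      have hlb : (formalInv w₁).length = a.length := by
        rw [hfib]
        rw [hw1, formalInv_length] at hlen
        omega
      simp [List.length_append, hlb]
    exact ⟨v₀, a, formalInv t, w₁, [], by simp [hv0], by simp [hwdec],
      hane, hw1ne, hlen, hprods, hpr, hev⟩
end

section
/- Let u = [[1,1],[0,1]] and v = [[1,0],[3,1]] in SL(2,ℤ). Then (u·v⁻¹)³ = 1 in SL(2,ℤ), so there is a (unique) group homomorphism φ from the presented group ⟨a, b ∣ (a·b⁻¹)³⟩ to SL(2,ℤ) with φ(a) = u and φ(b) = v; this homomorphism φ is injective, and its range is the subgroup of SL(2,ℤ) generated by u and v. -/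
open Matrix

/-- `u = [[1,1],[0,1]]` in `SL(2,ℤ)`. -/
def matU : Matrix.SpecialLinearGroup (Fin 2) ℤ :=
  ⟨!![1, 1; 0, 1], by norm_num [Matrix.det_fin_two_of]⟩

/-- `v = [[1,0],[3,1]]` in `SL(2,ℤ)`, the cube of the transpose of `u`. -/
def matV : Matrix.SpecialLinearGroup (Fin 2) ℤ :=
  ⟨!![1, 0; 3, 1], by norm_num [Matrix.det_fin_two_of]⟩

/-- The single relation `(a·b⁻¹)³` in the free group on two generators. -/
def windTreeRels : Set (FreeGroup (Fin 2)) :=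
  {(FreeGroup.of 0 * (FreeGroup.of 1)⁻¹) ^ 3}

open Pointwise

/-- `c = u·v⁻¹ = [[-2,1],[-3,1]]`, an element of order 3. -/
def matC : Matrix.SpecialLinearGroup (Fin 2) ℤ :=
  ⟨!![-2, 1; -3, 1], by norm_num [Matrix.det_fin_two_of]⟩

lemma matC_eq : matU * matV⁻¹ = matC := by
  apply Subtype.ext
  rw [Matrix.SpecialLinearGroup.coe_mul, Matrix.SpecialLinearGroup.coe_inv]
  show (!![1,1;0,1] : Matrix (Fin 2) (Fin 2) ℤ) * adjugate !![1,0;3,1] = !![-2,1;-3,1]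
  rw [Matrix.adjugate_fin_two, Matrix.mul_fin_two]
  norm_num

lemma matC_sq : @Eq (Matrix.SpecialLinearGroup (Fin 2) ℤ) (matC ^ 2)
    ⟨!![1, -1; 3, -2], by norm_num [Matrix.det_fin_two_of]⟩ := by
  rw [pow_two]
  apply Subtype.ext
  show (!![(-2:ℤ),1;-3,1]) * !![-2,1;-3,1] = !![1,-1;3,-2]
  rw [Matrix.mul_fin_two]; norm_num

lemma matC_cube : matC ^ 3 = 1 := by
  have : matC ^ 3 = matC ^ 2 * matC := by rw [pow_succ]
  rw [this, matC_sq]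
  apply Subtype.ext
  show (!![(1:ℤ),-1;3,-2]) * !![-2,1;-3,1] = (1 : Matrix (Fin 2) (Fin 2) ℤ)
  rw [Matrix.mul_fin_two, Matrix.one_fin_two]
  norm_num

lemma matV_zpow (n : ℤ) : (↑(matV ^ n) : Matrix (Fin 2) (Fin 2) ℤ) = !![1, 0; 3*n, 1] := by
  induction n using Int.induction_on with
  | zero => simp [Matrix.SpecialLinearGroup.coe_one, Matrix.one_fin_two]
  | succ k ih =>
      rw [_root_.zpow_add_one, Matrix.SpecialLinearGroup.coe_mul, ih]
      show _ * (!![1,0;3,1] : Matrix (Fin 2) (Fin 2) ℤ) = _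
      rw [Matrix.mul_fin_two]; norm_num; ring
  | pred k ih =>
      rw [_root_.zpow_sub_one, Matrix.SpecialLinearGroup.coe_mul, ih,
        Matrix.SpecialLinearGroup.coe_inv]
      show _ * adjugate (!![1,0;3,1] : Matrix (Fin 2) (Fin 2) ℤ) = _
      rw [Matrix.adjugate_fin_two, Matrix.mul_fin_two]; norm_num; ring

/-- Action of `SL(2,ℤ)` on `ℤ²` by matrix-vector multiplication. -/
instance sl2ZAction : MulAction (Matrix.SpecialLinearGroup (Fin 2) ℤ) (Fin 2 → ℤ) where
  smul g p := (↑g : Matrix (Fin 2) (Fin 2) ℤ).mulVec p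
  one_smul p := by
    show ((1 : Matrix.SpecialLinearGroup (Fin 2) ℤ) : Matrix (Fin 2) (Fin 2) ℤ).mulVec p = p
    simp
  mul_smul g h p := by
    show ((g * h : Matrix.SpecialLinearGroup (Fin 2) ℤ) : Matrix (Fin 2) (Fin 2) ℤ).mulVec p
      = (↑g : Matrix (Fin 2) (Fin 2) ℤ).mulVec ((↑h : Matrix (Fin 2) (Fin 2) ℤ).mulVec p)
    rw [Matrix.SpecialLinearGroup.coe_mul, Matrix.mulVec_mulVec]

lemma sl2Z_smul_eval (g : Matrix.SpecialLinearGroup (Fin 2) ℤ) (a b c d : ℤ)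
    (hg : (↑g : Matrix (Fin 2) (Fin 2) ℤ) = !![a, b; c, d]) (p : Fin 2 → ℤ) :
    g • p = ![a * p 0 + b * p 1, c * p 0 + d * p 1] := by
  show (↑g : Matrix (Fin 2) (Fin 2) ℤ).mulVec p = _
  rw [hg]
  funext i
  fin_cases i <;> simp [Matrix.mulVec, dotProduct, Fin.sum_univ_two]

/-- The condition defining the ping-pong set for the order-3 generator: the slope
`y/x` lies in `[0, 3)`. -/
def inCone (p : Fin 2 → ℤ) : Prop :=
  p 0 ≠ 0 ∧ 0 ≤ p 0 * p 1 ∧ p 0 * p 1 < 3 * p 0 ^ 2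

/-- The ping-pong sets. -/
def XPP : Fin 2 → Set (Fin 2 → ℤ)
  | 0 => {p | ¬ inCone p ∧ p ≠ 0}
  | 1 => {p | inCone p}

lemma XPP_nonempty : ∀ i, (XPP i).Nonempty := by
  intro i
  fin_cases i
  · refine ⟨![0, 1], ?_, ?_⟩
    · rintro ⟨h, -⟩; simp at h
    · intro h
      have := congrFun h 1
      simp at this
  · exact ⟨![1, 0], by constructor <;> norm_num [inCone]⟩

lemma XPP_disj01 : Disjoint (XPP 0) (XPP 1) := by
  rw [Set.disjoint_left]
  rintro p ⟨h, -⟩ hq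
  exact h hq

lemma XPP_disj : Pairwise (Function.onFun Disjoint XPP) := by
  intro i j hij
  fin_cases i <;> fin_cases j
  · exact absurd rfl hij
  · exact XPP_disj01
  · exact XPP_disj01.symm
  · exact absurd rfl hij

lemma pp_arith_v (n x y : ℤ) (hn : n ≠ 0) (hx : x ≠ 0) (h1 : 0 ≤ x * y)
    (h2 : x * y < 3 * x ^ 2) :
    ¬ (x ≠ 0 ∧ 0 ≤ x * (3 * n * x + y) ∧ x * (3 * n * x + y) < 3 * x ^ 2) := by
  rintro ⟨-, ha, hb⟩
  have hx2 : 0 < x ^ 2 := by positivity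
  rcases lt_or_gt_of_ne hn with hneg | hpos
  · nlinarith
  · nlinarith

lemma pp_arith_c (x y : ℤ)
    (h : (x = 0 ∧ y ≠ 0) ∨ (x ≠ 0 ∧ (x * y < 0 ∨ 3 * x ^ 2 ≤ x * y))) :
    (y - 2 * x ≠ 0) ∧ 0 ≤ (y - 2 * x) * (y - 3 * x) ∧
      (y - 2 * x) * (y - 3 * x) < 3 * (y - 2 * x) ^ 2 := by
  rcases h with ⟨rfl, hy⟩ | ⟨hx, h⟩
  · refine ⟨by simpa using hy, by nlinarith [sq_nonneg y], ?_⟩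
    have : 0 < y ^ 2 := by positivity
    nlinarith
  · have hx2 : 0 < x ^ 2 := by positivity
    rcases h with h | h
    · rcases lt_trichotomy x 0 with hx0 | hx0 | hx0
      · have hy : 0 < y := by nlinarith
        refine ⟨by nlinarith, by nlinarith, by nlinarith⟩
      · exact absurd hx0 hx
      · have hy : y < 0 := by nlinarith
        refine ⟨by nlinarith, by nlinarith, by nlinarith⟩
    · rcases lt_trichotomy x 0 with hx0 | hx0 | hx0
      · have hy : y ≤ 3 * x := by nlinarith
        refine ⟨by nlinarith, by nlinarith, by nlinarith⟩
      · exact absurd hx0 hx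
      · have hy : 3 * x ≤ y := by nlinarith
        refine ⟨by nlinarith, by nlinarith, by nlinarith⟩

lemma pp_arith_c2 (x y : ℤ)
    (h : (x = 0 ∧ y ≠ 0) ∨ (x ≠ 0 ∧ (x * y < 0 ∨ 3 * x ^ 2 ≤ x * y))) :
    (x - y ≠ 0) ∧ 0 ≤ (x - y) * (3 * x - 2 * y) ∧
      (x - y) * (3 * x - 2 * y) < 3 * (x - y) ^ 2 := by
  rcases h with ⟨rfl, hy⟩ | ⟨hx, h⟩
  · refine ⟨by simpa using hy, by nlinarith [sq_nonneg y], ?_⟩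
    have : 0 < y ^ 2 := by positivity
    nlinarith
  · have hx2 : 0 < x ^ 2 := by positivity
    rcases h with h | h
    · rcases lt_trichotomy x 0 with hx0 | hx0 | hx0
      · have hy : 0 < y := by nlinarith
        refine ⟨by nlinarith, by nlinarith, by nlinarith⟩
      · exact absurd hx0 hx
      · have hy : y < 0 := by nlinarith
        refine ⟨by nlinarith, by nlinarith, by nlinarith⟩
    · rcases lt_trichotomy x 0 with hx0 | hx0 | hx0
      · have hy : y ≤ 3 * x := by nlinarith
        refine ⟨by nlinarith, by nlinarith, by nlinarith⟩
      · exact absurd hx0 hx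
      · have hy : 3 * x ≤ y := by nlinarith
        refine ⟨by nlinarith, by nlinarith, by nlinarith⟩

lemma pp_v (m : ℤ) (hm : m ≠ 0) {p : Fin 2 → ℤ} (hp : p ∈ XPP 1) :
    (matV ^ m) • p ∈ XPP 0 := by
  obtain ⟨hx, h1, h2⟩ := hp
  have he : (matV ^ m) • p = ![p 0, 3 * m * p 0 + p 1] := by
    rw [sl2Z_smul_eval (matV ^ m) 1 0 (3*m) 1 (matV_zpow m) p]
    funext i; fin_cases i <;> simp
  rw [he]
  constructor
  · rintro ⟨h0, ha, hb⟩
    simp only [Matrix.cons_val_zero, Matrix.cons_val_one, Matrix.head_cons] at h0 ha hb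
    exact pp_arith_v m (p 0) (p 1) hm hx h1 h2 ⟨hx, by linarith, by linarith⟩
  · intro h
    have := congrFun h 0
    simp at this
    exact hx this

lemma pp_c (e : ℤ) (he : e = 1 ∨ e = 2) {p : Fin 2 → ℤ} (hp : p ∈ XPP 0) :
    (matC ^ e) • p ∈ XPP 1 := by
  obtain ⟨hnc, hne⟩ := hp
  have hd : (p 0 = 0 ∧ p 1 ≠ 0) ∨
      (p 0 ≠ 0 ∧ (p 0 * p 1 < 0 ∨ 3 * p 0 ^ 2 ≤ p 0 * p 1)) := by
    by_cases hx : p 0 = 0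
    · left
      refine ⟨hx, fun hy => hne ?_⟩
      funext i; fin_cases i <;> simp [hx, hy]
    · right
      refine ⟨hx, ?_⟩
      by_cases h1 : 0 ≤ p 0 * p 1
      · right
        by_contra hb
        push_neg at hb
        exact hnc ⟨hx, h1, hb⟩
      · exact Or.inl (not_le.mp h1)
  rcases he with rfl | rfl
  · have he1 : (matC ^ (1:ℤ)) • p = ![p 1 - 2 * p 0, p 1 - 3 * p 0] := by
      rw [zpow_one, sl2Z_smul_eval matC (-2) 1 (-3) 1 rfl p]
      funext i; fin_cases i <;> simp <;> ring
    rw [he1]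
    show _ ≠ _ ∧ _
    simpa [inCone] using pp_arith_c (p 0) (p 1) hd
  · have he2 : (matC ^ (2:ℤ)) • p = ![p 0 - p 1, 3 * p 0 - 2 * p 1] := by
      have h2 : matC ^ (2:ℤ) = matC ^ (2:ℕ) := by
        rw [show (2:ℤ) = ((2:ℕ):ℤ) from rfl, zpow_natCast]
      rw [h2, sl2Z_smul_eval (matC ^ (2:ℕ)) 1 (-1) 3 (-2)
        (congrArg Subtype.val matC_sq) p]
      funext i; fin_cases i <;> simp <;> ring
    rw [he2]
    show _ ≠ _ ∧ _
    simpa [inCone] using pp_arith_c2 (p 0) (p 1) hd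

/-- The family `ℤ`, `ℤ/3` of groups whose free product is `⟨a, b ∣ (a·b⁻¹)³⟩`. -/
def Hfam : Fin 2 → Type
  | 0 => Multiplicative ℤ
  | 1 => Multiplicative (ZMod 3)

instance HfamGroup : (i : Fin 2) → Group (Hfam i)
  | 0 => inferInstanceAs (Group (Multiplicative ℤ))
  | 1 => inferInstanceAs (Group (Multiplicative (ZMod 3)))

/-- Auxiliary additive hom for `zmod3Hom`. -/
def zmod3AddHom {M : Type*} [Group M] (c : M) (hc : c ^ 3 = 1) :
    {f : ℤ →+ Additive M // f 3 = 0} :=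
  ⟨zmultiplesHom (Additive M) (Additive.ofMul c), by
    rw [zmultiplesHom_apply,
      show ((3:ℤ) • Additive.ofMul c) = Additive.ofMul (c ^ (3:ℤ)) from (ofMul_zpow _ _).symm,
      show (3:ℤ) = ((3:ℕ):ℤ) from rfl, zpow_natCast, hc, ofMul_one]⟩

/-- The homomorphism `ℤ/3 →* M` sending the generator to an element of order dividing 3. -/
def zmod3Hom {M : Type*} [Group M] (c : M) (hc : c ^ 3 = 1) : Multiplicative (ZMod 3) →* M :=
  AddMonoidHom.toMultiplicativeLeft (ZMod.lift 3 (zmod3AddHom c hc))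

lemma zmod3Hom_apply {M : Type*} [Group M] (c : M) (hc : c ^ 3 = 1) (k : ℤ) :
    zmod3Hom c hc (Multiplicative.ofAdd ((k : ZMod 3))) = c ^ k := by
  show Additive.toMul ((ZMod.lift 3 (zmod3AddHom c hc)) ((k : ℤ) : ZMod 3)) = c ^ k
  rw [ZMod.lift_coe]
  show Additive.toMul ((k : ℤ) • Additive.ofMul c) = c ^ k
  rw [← ofMul_zpow]
  rfl

/-- The image `a·b⁻¹` of the order-3 element in the presented group. -/
def pgC : PresentedGroup windTreeRels :=
  PresentedGroup.of 0 * (PresentedGroup.of 1)⁻¹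

lemma pgC_cube : pgC ^ 3 = 1 := by
  have h1 : pgC ^ 3
      = PresentedGroup.mk windTreeRels ((FreeGroup.of 0 * (FreeGroup.of 1)⁻¹) ^ 3) := by
    rw [map_pow, _root_.map_mul, _root_.map_inv]
    rfl
  rw [h1]
  exact (QuotientGroup.eq_one_iff _).mpr
    (Subgroup.subset_normalClosure (s := windTreeRels) rfl)

/-- The maps from `ℤ` and `ℤ/3` to the presented group. -/
def gFam : (i : Fin 2) → (Hfam i →* PresentedGroup windTreeRels)
  | 0 => zpowersHom _ (PresentedGroup.of 1)
  | 1 => zmod3Hom pgC pgC_cube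

/-- The induced map from the free product `ℤ ∗ ℤ/3` to the presented group. -/
def ψwt : Monoid.CoprodI Hfam →* PresentedGroup windTreeRels :=
  Monoid.CoprodI.lift gFam

lemma ψwt_of1 : ψwt (Monoid.CoprodI.of (i := (0 : Fin 2)) (Multiplicative.ofAdd (1:ℤ)))
    = PresentedGroup.of 1 := by
  rw [ψwt]; erw [Monoid.CoprodI.lift_of]
  show zpowersHom _ (PresentedGroup.of 1) (Multiplicative.ofAdd (1:ℤ)) = _
  simp

lemma ψwt_ofC : ψwt (Monoid.CoprodI.of (i := (1 : Fin 2))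
      (Multiplicative.ofAdd (((1:ℤ) : ZMod 3)))) = pgC := by
  rw [ψwt]; erw [Monoid.CoprodI.lift_of]
  show zmod3Hom pgC pgC_cube (Multiplicative.ofAdd (((1:ℤ) : ZMod 3))) = _
  rw [zmod3Hom_apply, zpow_one]

lemma ψwt_surj : Function.Surjective ψwt := by
  intro x
  have hx : x ∈ ψwt.range := by
    apply PresentedGroup.generated_by
    intro j
    fin_cases j
    · show PresentedGroup.of (rels := windTreeRels) 0 ∈ ψwt.range
      have h1 : PresentedGroup.of (rels := windTreeRels) 1 ∈ ψwt.range :=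
        ⟨_, ψwt_of1⟩
      have hc : pgC ∈ ψwt.range := ⟨_, ψwt_ofC⟩
      have : PresentedGroup.of (rels := windTreeRels) 0 = pgC * PresentedGroup.of 1 := by
        rw [pgC, inv_mul_cancel_right]
      rw [this]
      exact mul_mem hc h1
    · show PresentedGroup.of (rels := windTreeRels) 1 ∈ ψwt.range
      exact ⟨_, ψwt_of1⟩
  exact hx

lemma hpp_v (φ : PresentedGroup windTreeRels →* Matrix.SpecialLinearGroup (Fin 2) ℤ)
    (h1 : φ (PresentedGroup.of 1) = matV) (n : Multiplicative ℤ) (hn : n ≠ 1) :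
    (φ.comp (gFam 0)) n • XPP 1 ⊆ XPP 0 := by
  intro p hp
  obtain ⟨q, hq, rfl⟩ := Set.mem_smul_set.mp hp
  have hFn : (φ.comp (gFam 0)) n = matV ^ (Multiplicative.toAdd n) := by
    show φ (zpowersHom _ (PresentedGroup.of 1) n) = _
    rw [zpowersHom_apply, map_zpow, h1]
  rw [hFn]
  exact pp_v _ (by simpa using hn) hq

lemma hpp_c (φ : PresentedGroup windTreeRels →* Matrix.SpecialLinearGroup (Fin 2) ℤ)
    (hCφ : φ pgC = matC) (k : Multiplicative (ZMod 3)) (hk : k ≠ 1) :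
    (φ.comp (gFam 1)) k • XPP 0 ⊆ XPP 1 := by
  intro p hp
  obtain ⟨q, hq, rfl⟩ := Set.mem_smul_set.mp hp
  have key : ∀ e : ℤ, (e = 1 ∨ e = 2) →
      Multiplicative.toAdd k = ((e : ℤ) : ZMod 3) → (φ.comp (gFam 1)) k • q ∈ XPP 1 := by
    intro e he hke
    have hkk : k = Multiplicative.ofAdd (((e : ℤ) : ZMod 3)) := by
      rw [← hke]
      rfl
    have hFk : (φ.comp (gFam 1)) k = matC ^ e := by
      show φ (zmod3Hom pgC pgC_cube k) = _
      rw [hkk, zmod3Hom_apply, map_zpow, hCφ]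
    rw [hFk]
    exact pp_c e he hq
  have hk' : Multiplicative.toAdd k = ((1:ℤ) : ZMod 3)
      ∨ Multiplicative.toAdd k = ((2:ℤ) : ZMod 3) := by
    have h' : Multiplicative.toAdd k ≠ 0 := by simpa using hk
    generalize Multiplicative.toAdd k = j at h' ⊢
    revert j
    decide
  rcases hk' with hke | hke
  · exact key 1 (Or.inl rfl) hke
  · exact key 2 (Or.inr rfl) hke

/-- `⟨a, b ∣ (a·b⁻¹)³⟩` is a presentation of the subgroup of `SL(2,ℤ)` generated
by `u` and `v = ᵗu³` (Appendix B of the paper). -/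
theorem presentation_of_wind_tree_group :
    (matU * matV⁻¹) ^ 3 = 1 ∧
    (∃! φ : PresentedGroup windTreeRels →* Matrix.SpecialLinearGroup (Fin 2) ℤ,
      φ (PresentedGroup.of 0) = matU ∧ φ (PresentedGroup.of 1) = matV) ∧
    (∀ φ : PresentedGroup windTreeRels →* Matrix.SpecialLinearGroup (Fin 2) ℤ,
      φ (PresentedGroup.of 0) = matU → φ (PresentedGroup.of 1) = matV →
        Function.Injective φ ∧
        φ.range = Subgroup.closure {matU, matV}) := by
  have part1 : (matU * matV⁻¹) ^ 3 = 1 := by rw [matC_eq]; exact matC_cube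
  have hrel : ∀ r ∈ windTreeRels, FreeGroup.lift (![matU, matV]) r = 1 := by
    intro r hr
    rw [windTreeRels, Set.mem_singleton_iff] at hr
    subst hr
    rw [map_pow, _root_.map_mul, _root_.map_inv, FreeGroup.lift_apply_of, FreeGroup.lift_apply_of]
    simpa using part1
  refine ⟨part1, ⟨PresentedGroup.toGroup hrel, ⟨?_, ?_⟩, ?_⟩, ?_⟩
  · simpa using PresentedGroup.toGroup.of hrel (x := 0)
  · simpa using PresentedGroup.toGroup.of hrel (x := 1)
  · rintro ψ ⟨hψ0, hψ1⟩
    apply PresentedGroup.ext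
    intro x
    fin_cases x
    · show ψ (PresentedGroup.of 0) = PresentedGroup.toGroup hrel (PresentedGroup.of 0)
      rw [hψ0, PresentedGroup.toGroup.of]
      simp
    · show ψ (PresentedGroup.of 1) = PresentedGroup.toGroup hrel (PresentedGroup.of 1)
      rw [hψ1, PresentedGroup.toGroup.of]
      simp
  · intro φ h0 h1
    have hCφ : φ pgC = matC := by
      rw [pgC, _root_.map_mul, _root_.map_inv, h0, h1, matC_eq]
    set F : (i : Fin 2) → (Hfam i →* Matrix.SpecialLinearGroup (Fin 2) ℤ) :=
      fun i => φ.comp (gFam i) with hF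
    have hψφ : φ.comp ψwt = Monoid.CoprodI.lift F := by
      apply Monoid.CoprodI.ext_hom
      intro i
      ext x
      simp [ψwt, Monoid.CoprodI.lift_of, hF]
    have hcard : (3 ≤ Cardinal.mk (Fin 2)) ∨ ∃ i, 3 ≤ Cardinal.mk (Hfam i) := by
      right
      refine ⟨0, ?_⟩
      show (3 : Cardinal) ≤ Cardinal.mk ℤ
      rw [Cardinal.mk_int]
      exact le_of_lt (by exact_mod_cast Cardinal.nat_lt_aleph0 3)
    have hpp : Pairwise fun i j => ∀ h : Hfam i, h ≠ 1 → (F i) h • XPP j ⊆ XPP i := by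
      intro i j hij
      fin_cases i <;> fin_cases j
      · exact absurd rfl hij
      · exact fun n hn => hpp_v φ h1 n hn
      · exact fun k hk => hpp_c φ hCφ k hk
      · exact absurd rfl hij
    have hinj2 : Function.Injective (φ.comp ψwt) := by
      rw [hψφ]
      exact Monoid.CoprodI.lift_injective_of_ping_pong F hcard XPP XPP_nonempty XPP_disj hpp
    constructor
    · intro x y hxy
      obtain ⟨a, rfl⟩ := ψwt_surj x
      obtain ⟨b, rfl⟩ := ψwt_surj y
      exact congrArg ψwt (hinj2 (show (φ.comp ψwt) a = (φ.comp ψwt) b by simpa using hxy))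
    · have hS : Set.range (PresentedGroup.of : Fin 2 → PresentedGroup windTreeRels)
          = {PresentedGroup.of 0, PresentedGroup.of 1} := by
        ext z
        simp [Fin.exists_fin_two, Set.mem_insert_iff, eq_comm]
      have htop : Subgroup.closure ({PresentedGroup.of 0, PresentedGroup.of 1} :
          Set (PresentedGroup windTreeRels)) = ⊤ := by
        rw [← hS, PresentedGroup.closure_range_of]
      calc φ.range = Subgroup.map φ ⊤ := by rw [← MonoidHom.range_eq_map]
        _ = Subgroup.map φ (Subgroup.closure {PresentedGroup.of 0, PresentedGroup.of 1}) := by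
            rw [htop]
        _ = Subgroup.closure (φ '' {PresentedGroup.of 0, PresentedGroup.of 1}) :=
            (MonoidHom.map_closure φ _)
        _ = Subgroup.closure {matU, matV} := by
            rw [Set.image_insert_eq, Set.image_singleton, h0, h1]
end

section
/- There exist real numbers L > 0 and R > 0 such that 2·e^L·(tanh R)³ ≤ 1 and, writing A = L·sinh R and C = L / arctan(sinh R), one has (1/(4π)) · ((1/2)·A·C) / ((√((1/2)·A) + √C)²) > 0.02575. -/
lemma arctan_le_quintic {x : ℝ} (hx : 0 ≤ x) :
    Real.arctan x ≤ x - x ^ 3 / 3 + x ^ 5 / 5 := by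
  set g : ℝ → ℝ := fun y => y - y ^ 3 / 3 + y ^ 5 / 5 - Real.arctan y with hg
  have hder : ∀ y : ℝ, HasDerivAt g (1 - y ^ 2 + y ^ 4 - 1 / (1 + y ^ 2)) y := by
    intro y
    have h1 : HasDerivAt (fun y : ℝ => y - y ^ 3 / 3 + y ^ 5 / 5) (1 - y ^ 2 + y ^ 4) y := by
      have := ((hasDerivAt_id y).sub ((hasDerivAt_pow 3 y).div_const 3)).add
        ((hasDerivAt_pow 5 y).div_const 5)
      refine this.congr_deriv ?_
      push_cast; ring
    exact h1.sub (Real.hasDerivAt_arctan y)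
  have hmono : Monotone g := by
    apply monotone_of_deriv_nonneg
    · exact fun y => (hder y).differentiableAt
    · intro y
      rw [(hder y).deriv]
      have hy : (0:ℝ) < 1 + y ^ 2 := by positivity
      rw [sub_nonneg, div_le_iff₀ hy]
      nlinarith [sq_nonneg (y ^ 3), sq_nonneg y, sq_nonneg (y ^ 2)]
  have h0 : g 0 = 0 := by simp [hg]
  have := hmono hx
  rw [h0] at this
  simp only [hg] at this
  linarith

lemma exp_38873 : Real.exp (38873/10000 : ℝ) ≤ 2439/50 := by
  have hx : Real.exp (38873/10000 : ℝ) = Real.exp (38873/40000 : ℝ) ^ 4 := by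
    rw [← Real.exp_nat_mul]; norm_num
  have hb := Real.exp_bound' (x := (38873/40000 : ℝ)) (by norm_num) (by norm_num)
    (n := 13) (by norm_num)
  have hsum : (∑ m ∈ Finset.range 13, (38873/40000 : ℝ) ^ m / m.factorial) +
      (38873/40000 : ℝ) ^ 13 * (13 + 1) / (Nat.factorial 13 * 13) ≤ 2.642764 := by
    simp [Finset.sum_range_succ, Nat.factorial]
    norm_num
  have h2 : Real.exp (38873/40000 : ℝ) ≤ 2.642764 := le_trans hb hsum
  rw [hx]
  calc Real.exp (38873/40000 : ℝ) ^ 4 ≤ 2.642764 ^ 4 := by gcongr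
    _ ≤ 2439/50 := by norm_num

set_option maxHeartbeats 1000000 in
/-- Theorem A.1 (theo:energy) in explicit analytic form: there are admissible
`L, R > 0` (i.e. `2·e^L·tanh³R ≤ 1`) for which the energy lower bound
`E_D = (1/(2·Area D))·(η·A·C)/((√(η·A)+√C)²)` with `η = 1/2`, `Area D = 2π`,
`A = L·sinh R`, `C = L/arctan(sinh R)` exceeds `0.02575`. -/
theorem energy_estimate :
    ∃ L R : ℝ, 0 < L ∧ 0 < R ∧
      2 * Real.exp L * Real.tanh R ^ 3 ≤ 1 ∧
      (1 / (4 * Real.pi)) *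
          ((1 / 2) * (L * Real.sinh R) * (L / Real.arctan (Real.sinh R))) /
          ((Real.sqrt ((1 / 2) * (L * Real.sinh R)) +
              Real.sqrt (L / Real.arctan (Real.sinh R))) ^ 2) >
        0.02575 := by
  set L := Real.log (2439/50 : ℝ) with hLdef
  set R := Real.log (1247/1000 : ℝ) with hRdef
  have hexpR : Real.exp R = 1247/1000 := Real.exp_log (by norm_num)
  have hexpnR : Real.exp (-R) = 1000/1247 := by
    rw [Real.exp_neg, hexpR]; norm_num
  have hs : Real.sinh R = 555009/2494000 := by
    rw [Real.sinh_eq, hexpR, hexpnR]; norm_num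
  have ht : Real.tanh R = 555009/2555009 := by
    rw [Real.tanh_eq_sinh_div_cosh, Real.sinh_eq, Real.cosh_eq, hexpR, hexpnR]
    norm_num
  have hL : (38873/10000 : ℝ) ≤ L := by
    rw [hLdef, Real.le_log_iff_exp_le (by norm_num)]
    exact exp_38873
  have hL0 : (0:ℝ) < L := Real.log_pos (by norm_num)
  refine ⟨L, R, Real.log_pos (by norm_num), Real.log_pos (by norm_num), ?_, ?_⟩
  · -- constraint
    rw [hLdef, Real.exp_log (by norm_num), ht]
    norm_num
  · -- energy bound
    have harc_le : Real.arctan (Real.sinh R) ≤ 0.21897327 := by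
      refine le_trans (arctan_le_quintic (by rw [hs]; norm_num)) ?_
      rw [hs]; norm_num
    have harc_pos : 0 < Real.arctan (Real.sinh R) := by
      rw [hs]
      have := Real.arctan_strictMono (show (0:ℝ) < 555009/2494000 by norm_num)
      rwa [Real.arctan_zero] at this
    set A := (1/2) * (L * Real.sinh R) with hA
    set C := L / Real.arctan (Real.sinh R) with hC
    have hApos : 0 < A := by
      rw [hA, hs]; positivity
    have hCpos : 0 < C := div_pos hL0 harc_pos
    have hAlb : (657674/1000000 : ℝ)^2 ≤ A := by
      rw [hA, hs]
      nlinarith [hL]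
    have hClb : (4213358/1000000 : ℝ)^2 ≤ C := by
      rw [hC]
      have : (38873/10000 : ℝ) / 0.21897327 ≤ L / Real.arctan (Real.sinh R) :=
        div_le_div₀ hL0.le hL harc_pos harc_le
      refine le_trans ?_ this
      norm_num
    set X := Real.sqrt A with hX
    set Y := Real.sqrt C with hY
    have hX2 : X ^ 2 = A := Real.sq_sqrt hApos.le
    have hY2 : Y ^ 2 = C := Real.sq_sqrt hCpos.le
    have hXlb : (657674/1000000 : ℝ) ≤ X := Real.le_sqrt' (by norm_num) |>.2 hAlb
    have hYlb : (4213358/1000000 : ℝ) ≤ Y := Real.le_sqrt' (by norm_num) |>.2 hClb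
    have hXpos : (0:ℝ) < X := lt_of_lt_of_le (by norm_num) hXlb
    have hYpos : (0:ℝ) < Y := lt_of_lt_of_le (by norm_num) hYlb
    clear_value X Y
    clear_value A C
    have hpi : Real.pi < 3.141593 := Real.pi_lt_d6
    have hpi0 : 0 < Real.pi := Real.pi_pos
    -- key monotonicity
    have hkey : (657674/1000000 : ℝ) * (4213358/1000000) * (X + Y) ≤
        X * Y * (657674/1000000 + 4213358/1000000) := by
      nlinarith [mul_nonneg hXpos.le (sub_nonneg.2 hYlb), mul_nonneg hYpos.le (sub_nonneg.2 hXlb)]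
    have hsq : ((657674/1000000 : ℝ) * (4213358/1000000))^2 * (X + Y)^2 ≤
        (X * Y)^2 * ((657674/1000000 : ℝ) + 4213358/1000000)^2 := by
      have h1 : (0:ℝ) ≤ (657674/1000000 : ℝ) * (4213358/1000000) * (X + Y) := by positivity
      nlinarith [hkey, h1]
    have h6 : (0.3236 : ℝ) * (X+Y)^2 ≤ X^2 * Y^2 := by nlinarith [hsq]
    have hXY2 : (0:ℝ) < (X + Y)^2 := pow_pos (by linarith) 2
    have h7 : (0.02575 : ℝ) * (4 * Real.pi) < 0.3236 := by linarith
    have hfin : 0.02575 * (4 * Real.pi) * (X + Y)^2 < X^2 * Y^2 := by nlinarith [hXY2]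
    rw [gt_iff_lt, lt_div_iff₀ hXY2]
    have hac : A * C = X^2 * Y^2 := by rw [hX2, hY2]
    have h4pi : (0:ℝ) < 4 * Real.pi := by linarith
    rw [div_mul_eq_mul_div, lt_div_iff₀ h4pi, one_mul, hac]
    nlinarith [hfin]
end

section
/- Let h > 0 and R > 0, and consider the points z = (1 − h·tanh R) + (h/cosh R)·i and w = 1 + h·i of the upper half-plane ℍ. Then the hyperbolic distance from z to w equals R, and for every y > 0 the hyperbolic distance from z to the point 1 + y·i is at least R (so the distance from z to the geodesic {Re = 1} equals R). -/
open UpperHalfPlane Complex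

/-- The point `z = (1 − h·tanh R) + i·h·sech R` is at hyperbolic distance `R` both
from `1 + h·i` and from the geodesic `{Re = 1}` (proof of Proposition A.1). -/
theorem dist_to_vertical_geodesic (h R : ℝ) (hh : 0 < h) (hR : 0 < R)
    (z w : UpperHalfPlane)
    (hz : (z : ℂ) = (1 - h * Real.tanh R) + (h / Real.cosh R) * Complex.I)
    (hw : (w : ℂ) = 1 + h * Complex.I) :
    dist z w = R ∧
      ∀ y : ℝ, 0 < y → ∀ p : UpperHalfPlane,
        (p : ℂ) = 1 + y * Complex.I → R ≤ dist z p := by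
  have hc : (0:ℝ) < Real.cosh R := Real.cosh_pos R
  have hsq : Real.cosh R ^ 2 = Real.sinh R ^ 2 + 1 := Real.cosh_sq R
  have htanh : Real.tanh R = Real.sinh R / Real.cosh R := Real.tanh_eq_sinh_div_cosh R
  have hzim : z.im = h / Real.cosh R := by
    have := congrArg Complex.im hz
    rw [UpperHalfPlane.coe_im] at this
    simpa [← Complex.ofReal_cosh, ← Complex.ofReal_tanh, ← Complex.ofReal_div] using this
  have hwim : w.im = h := by
    have := congrArg Complex.im hw
    rw [UpperHalfPlane.coe_im] at this
    simpa using this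
  constructor
  · have hcd : Real.cosh (dist z w) = Real.cosh R := by
      rw [UpperHalfPlane.cosh_dist, Complex.dist_eq, Complex.sq_norm, hzim, hwim]
      have hsub : (z : ℂ) - w = ((-(h * Real.tanh R) : ℝ) : ℂ)
          + ((h / Real.cosh R - h : ℝ) : ℂ) * Complex.I := by
        rw [hz, hw]; push_cast; ring
      rw [hsub, Complex.normSq_add_mul_I, htanh]
      field_simp
      linear_combination (-1 : ℝ) * hsq
    have := Real.cosh_strictMonoOn.injOn (Set.mem_Ici.2 dist_nonneg) (Set.mem_Ici.2 hR.le) hcd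
    exact this
  · intro y hy p hp
    have hpim : p.im = y := by
      have := congrArg Complex.im hp
      rw [UpperHalfPlane.coe_im] at this
      simpa using this
    have hcd : Real.cosh R ≤ Real.cosh (dist z p) := by
      rw [UpperHalfPlane.cosh_dist, Complex.dist_eq, Complex.sq_norm, hzim, hpim]
      have hsub : (z : ℂ) - p = ((-(h * Real.tanh R) : ℝ) : ℂ)
          + ((h / Real.cosh R - y : ℝ) : ℂ) * Complex.I := by
        rw [hz, hp]; push_cast; ring
      rw [hsub, Complex.normSq_add_mul_I, htanh]
      rw [← sub_nonneg]
      have key : 1 + ((-(h * (Real.sinh R / Real.cosh R))) ^ 2 + (h / Real.cosh R - y) ^ 2) /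
          (2 * (h / Real.cosh R) * y) - Real.cosh R =
          ((h - y) ^ 2 * Real.cosh R) / (2 * h * y) := by
        field_simp
        linear_combination (-h ^ 2) * hsq
      rw [key]
      positivity
    have : |R| ≤ |dist z p| := Real.cosh_le_cosh.1 hcd
    rwa [_root_.abs_of_nonneg hR.le, _root_.abs_of_nonneg dist_nonneg] at this
end

section
/- Let Γ be a discrete subgroup of SL(2,ℝ) containing the matrix p = [[1,1],[0,1]]. Then there exists a constant c ∈ ℝ such that for every real L ≥ 1 and every g ∈ Γ with 0 ≤ Re(g•i) < 1 and Im(g•i) ≥ 1/L², one has dist(i, g•i) ≤ 2·log L + c. (Equivalently, the set {g ∈ Γ : Re(g•i) ∈ [0,1), Im(g•i)^{−1/2} ≤ L} is contained in {g ∈ Γ : dist(i, g•i) ≤ 2 log L + c}, so the orbital count N_Γ(L) is at most n_Γ(2 log L + c).) -/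
open UpperHalfPlane Matrix

/-- `SL(2,ℝ)` with the topology induced from the space of matrices. -/
instance : TopologicalSpace (Matrix.SpecialLinearGroup (Fin 2) ℝ) :=
  TopologicalSpace.induced (fun g => (g : Matrix (Fin 2) (Fin 2) ℝ)) inferInstance

/-- The parabolic matrix `p = [[1,1],[0,1]]` in `SL(2,ℝ)`. -/
def matP : Matrix.SpecialLinearGroup (Fin 2) ℝ :=
  ⟨!![1, 1; 0, 1], by norm_num [Matrix.det_fin_two_of]⟩


open Filter in
lemma conj_entries (g : Matrix.SpecialLinearGroup (Fin 2) ℝ) :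
    ((g⁻¹ * matP * g : Matrix.SpecialLinearGroup (Fin 2) ℝ) : Matrix (Fin 2) (Fin 2) ℝ)
      = !![1 + g 1 1 * g 1 0, g 1 1 ^ 2; -(g 1 0 ^ 2), 1 - g 1 0 * g 1 1] := by
  have hdet : g.1.det = 1 := g.2
  rw [Matrix.det_fin_two] at hdet
  rw [Matrix.SpecialLinearGroup.coe_mul, Matrix.SpecialLinearGroup.coe_mul, Matrix.SpecialLinearGroup.coe_inv, Matrix.adjugate_fin_two]
  ext i j
  simp only [Matrix.SpecialLinearGroup.coe_mul, matP]
  fin_cases i <;> fin_cases j <;>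
    simp [Matrix.mul_apply, Fin.sum_univ_two] <;> nlinarith [hdet]


open Filter in
lemma exists_delta (Γ : Subgroup (Matrix.SpecialLinearGroup (Fin 2) ℝ))
    (hdisc : DiscreteTopology Γ) (hp : matP ∈ Γ) :
    ∃ δ : ℝ, 0 < δ ∧ ∀ g ∈ Γ, δ ≤ (g 1 0)^2 + (g 1 1)^2 := by
  by_contra hcon
  push_neg at hcon
  choose u hu hu2 using fun n : ℕ => hcon (1/(n+1)) (by positivity)
  have hf0 : Tendsto (fun n : ℕ => (u n 1 0)^2 + (u n 1 1)^2) atTop (nhds 0) := by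
    apply squeeze_zero (fun n => by positivity) (fun n => (hu2 n).le)
    exact tendsto_one_div_add_atTop_nhds_zero_nat
  set v : ℕ → Γ := fun n => ⟨(u n)⁻¹ * matP * u n,
    mul_mem (mul_mem (inv_mem (hu n)) hp) (hu n)⟩ with hv
  have hne : ∀ n, v n ≠ 1 := by
    intro n h
    have : (u n)⁻¹ * matP * u n = 1 := congrArg Subtype.val h
    have hP : matP = 1 := by
      have := congrArg (fun x => u n * x * (u n)⁻¹) this
      group at this
      simpa using this
    have : matP.1 0 1 = (1 : Matrix.SpecialLinearGroup (Fin 2) ℝ).1 0 1 := by rw [hP]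
    simp [matP] at this
  have hbound : ∀ n i j, |((v n : Matrix.SpecialLinearGroup (Fin 2) ℝ) :
      Matrix (Fin 2) (Fin 2) ℝ) i j - (1 : Matrix (Fin 2) (Fin 2) ℝ) i j|
        ≤ (u n 1 0)^2 + (u n 1 1)^2 := by
    intro n i j
    show |((((u n)⁻¹ * matP * u n : Matrix.SpecialLinearGroup (Fin 2) ℝ)) :
      Matrix (Fin 2) (Fin 2) ℝ) i j - (1 : Matrix (Fin 2) (Fin 2) ℝ) i j| ≤ _
    rw [conj_entries]
    fin_cases i <;> fin_cases j <;>
      simp [Matrix.one_apply] <;>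
      first
        | (rw [abs_le]; constructor <;> nlinarith [sq_nonneg (u n 1 0 + u n 1 1),
            sq_nonneg (u n 1 0 - u n 1 1), sq_nonneg (u n 1 0), sq_nonneg (u n 1 1)])
        | nlinarith [sq_nonneg (u n 1 0), sq_nonneg (u n 1 1), sq_abs (u n 1 0), sq_abs (u n 1 1),
            abs_nonneg (u n 1 0), abs_nonneg (u n 1 1), sq_nonneg (|u n 1 0| - |u n 1 1|)]
  have hSL : Tendsto (fun n => ((v n : Matrix.SpecialLinearGroup (Fin 2) ℝ)))
      atTop (nhds (1 : Matrix.SpecialLinearGroup (Fin 2) ℝ)) := by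
    rw [nhds_induced, tendsto_comap_iff]
    refine tendsto_pi_nhds.mpr fun i => tendsto_pi_nhds.mpr fun j => ?_
    rw [← tendsto_sub_nhds_zero_iff]
    exact squeeze_zero_norm (fun n => hbound n i j) hf0
  have htend : Tendsto v atTop (nhds (1 : Γ)) := by
    rw [nhds_induced, tendsto_comap_iff]
    exact hSL
  have hmem : {(1 : Γ)} ∈ nhds (1 : Γ) := (isOpen_discrete {(1:Γ)}).mem_nhds rfl
  have hev : ∀ᶠ n in atTop, v n ∈ ({1} : Set Γ) := htend hmem
  obtain ⟨n, hn⟩ := hev.exists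
  exact hne n hn


lemma sq_add_sq_ne (g : Matrix.SpecialLinearGroup (Fin 2) ℝ) :
    (g 1 0)^2 + (g 1 1)^2 ≠ 0 := by
  have hdet : g.1.det = 1 := g.2
  rw [Matrix.det_fin_two] at hdet
  intro h
  have h1 : g 1 0 = 0 := by nlinarith [sq_nonneg (g 1 0), sq_nonneg (g 1 1)]
  have h2 : g 1 1 = 0 := by nlinarith [sq_nonneg (g 1 0), sq_nonneg (g 1 1)]
  rw [h1, h2] at hdet; simp at hdet

lemma smul_I_coe (g : Matrix.SpecialLinearGroup (Fin 2) ℝ) :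
    ((g • UpperHalfPlane.I : UpperHalfPlane) : ℂ)
      = (((g 0 0 * g 1 0 + g 0 1 * g 1 1 : ℝ) : ℂ) + Complex.I)
        / (((g 1 0)^2 + (g 1 1)^2 : ℝ) : ℂ) := by
  have hdet : g.1.det = 1 := g.2
  rw [Matrix.det_fin_two] at hdet
  have hdetC : (g 0 0 : ℂ) * g 1 1 - g 0 1 * g 1 0 = 1 := by
    exact_mod_cast congrArg (Complex.ofReal) hdet
  have h2 : (((g 1 0)^2 + (g 1 1)^2 : ℝ) : ℂ) ≠ 0 := by
    exact_mod_cast Complex.ofReal_ne_zero.mpr (sq_add_sq_ne g)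
  have h1 : (g 1 0 : ℂ) * Complex.I + (g 1 1 : ℂ) ≠ 0 := by
    intro heq
    have him := congrArg Complex.im heq
    have hre := congrArg Complex.re heq
    simp at him hre
    exact sq_add_sq_ne g (by rw [him, hre]; ring)
  rw [UpperHalfPlane.specialLinearGroup_apply]
  simp only [UpperHalfPlane.coe_mk, UpperHalfPlane.coe_I,
    Algebra.algebraMap_self, RingHom.id_apply]
  rw [div_eq_div_iff h1 h2]
  push_cast
  linear_combination (Complex.I * (g 1 1 : ℂ) - (g 1 0 : ℂ)) * hdetC - (g 1 0 : ℂ) * Complex.I_sq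

lemma smul_I_im (g : Matrix.SpecialLinearGroup (Fin 2) ℝ) :
    (g • UpperHalfPlane.I : UpperHalfPlane).im = 1 / ((g 1 0)^2 + (g 1 1)^2) := by
  have h := sq_add_sq_ne g
  have : (g • UpperHalfPlane.I : UpperHalfPlane).im
      = ((g • UpperHalfPlane.I : UpperHalfPlane) : ℂ).im := rfl
  rw [this, smul_I_coe, Complex.div_ofReal_im]
  simp

lemma smul_I_re (g : Matrix.SpecialLinearGroup (Fin 2) ℝ) :
    ((g • UpperHalfPlane.I : UpperHalfPlane) : ℂ).re
      = (g 0 0 * g 1 0 + g 0 1 * g 1 1) / ((g 1 0)^2 + (g 1 1)^2) := by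
  rw [smul_I_coe, Complex.div_ofReal_re]
  simp

lemma arsinh_le_log (t : ℝ) (ht : 0 ≤ t) : Real.arsinh t ≤ Real.log (2 * t + 1) := by
  rw [Real.arsinh]
  apply Real.log_le_log (by positivity)
  have h : Real.sqrt (1 + t^2) ≤ t + 1 := by
    rw [show t + 1 = Real.sqrt ((t+1)^2) by rw [Real.sqrt_sq (by linarith)]]
    exact Real.sqrt_le_sqrt (by nlinarith)
  linarith


lemma dist_bound (M L : ℝ) (hM : 0 < M) (hL : 1 ≤ L) (z : UpperHalfPlane)
    (hre0 : 0 ≤ (z : ℂ).re) (hre1 : (z : ℂ).re < 1)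
    (hyL : 1 / L^2 ≤ z.im) (hyM : z.im ≤ M) :
    dist UpperHalfPlane.I z ≤ 2 * Real.log L + 2 * Real.log (M + 3) := by
  have hy : 0 < z.im := z.im_pos
  have hL0 : 0 < L := by linarith
  rw [UpperHalfPlane.dist_eq, UpperHalfPlane.I_im]
  set y := z.im with hyy
  have hsq : Real.sqrt (1 * y) = Real.sqrt y := by rw [one_mul]
  -- dist of complex points
  have hD : dist (UpperHalfPlane.I : ℂ) (z : ℂ) ≤ M + 2 := by
    rw [Complex.dist_eq]
    have habs : ‖(UpperHalfPlane.I : ℂ) - z‖ ^ 2 = (z:ℂ).re ^ 2 + (1 - y)^2 := by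
      rw [Complex.sq_norm, Complex.normSq_apply]
      simp [UpperHalfPlane.coe_I, UpperHalfPlane.coe_im]
      ring
    nlinarith [norm_nonneg ((UpperHalfPlane.I : ℂ) - z), sq_nonneg ((z:ℂ).re)]
  have hsqy : 1 / L ≤ Real.sqrt y := by
    rw [show (1:ℝ)/L = Real.sqrt ((1/L)^2) by rw [Real.sqrt_sq (by positivity)]]
    apply Real.sqrt_le_sqrt
    rw [div_pow, one_pow]; exact hyL
  have hsy : 0 < Real.sqrt y := Real.sqrt_pos.mpr hy
  set t := dist (UpperHalfPlane.I : ℂ) (z : ℂ) / (2 * Real.sqrt (1 * y)) with hts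
  have ht0 : 0 ≤ t := by positivity
  have htB : t ≤ (M + 2) * L / 2 := by
    rw [hts, hsq, div_le_div_iff₀ (by positivity) (by norm_num)]
    have h1 : dist (UpperHalfPlane.I : ℂ) (z : ℂ) * L ≤ (M+2) * L := by
      apply mul_le_mul_of_nonneg_right hD hL0.le
    calc dist (UpperHalfPlane.I : ℂ) (z : ℂ) * 2 = 2 * dist (UpperHalfPlane.I : ℂ) (z : ℂ) := by ring
      _ ≤ 2 * ((M+2) * (L * Real.sqrt y)) := by
          apply mul_le_mul_of_nonneg_left _ (by norm_num)
          have hLy : 1 ≤ L * Real.sqrt y := by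
            have h2 := mul_le_mul_of_nonneg_left hsqy (le_of_lt hL0)
            rwa [mul_one_div, div_self hL0.ne'] at h2
          calc dist (UpperHalfPlane.I : ℂ) (z : ℂ) ≤ M + 2 := hD
            _ ≤ (M+2) * (L * Real.sqrt y) := by nlinarith
      _ = (M + 2) * L * (2 * Real.sqrt y) := by ring
  have harc : Real.arsinh t ≤ Real.log (2 * t + 1) := arsinh_le_log t ht0
  have hlog : Real.log (2 * t + 1) ≤ Real.log ((M + 3) * L) := by
    apply Real.log_le_log (by positivity)
    nlinarith
  calc 2 * Real.arsinh t ≤ 2 * Real.log ((M+3) * L) := by linarith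
    _ = 2 * Real.log L + 2 * Real.log (M + 3) := by
        rw [Real.log_mul (by positivity) (by positivity)]; ring


/-- The central counting inequality in the proof of Theorem 3.2
(theo:critical exponent): for a discrete group `Γ` containing `p`, elements with
`Re(g•i) ∈ [0,1)` and `Im(g•i) ≥ 1/L²` satisfy `d(i, g•i) ≤ 2 log L + c`. -/
theorem orbit_count_inequality (Γ : Subgroup (Matrix.SpecialLinearGroup (Fin 2) ℝ))
    (hdisc : DiscreteTopology Γ) (hp : matP ∈ Γ) :
    ∃ c : ℝ, ∀ L : ℝ, 1 ≤ L → ∀ g : Matrix.SpecialLinearGroup (Fin 2) ℝ, g ∈ Γ →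
      0 ≤ ((g • UpperHalfPlane.I : UpperHalfPlane) : ℂ).re →
      ((g • UpperHalfPlane.I : UpperHalfPlane) : ℂ).re < 1 →
      1 / L ^ 2 ≤ (g • UpperHalfPlane.I : UpperHalfPlane).im →
      dist UpperHalfPlane.I (g • UpperHalfPlane.I : UpperHalfPlane) ≤
        2 * Real.log L + c := by
  obtain ⟨δ, hδ, hΓ⟩ := exists_delta Γ hdisc hp
  refine ⟨2 * Real.log (1/δ + 3), fun L hL g hg hre0 hre1 hyL => ?_⟩
  have hyM : (g • UpperHalfPlane.I : UpperHalfPlane).im ≤ 1/δ := by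
    rw [smul_I_im]
    exact one_div_le_one_div_of_le hδ (hΓ g hg)
  exact dist_bound (1/δ) L (by positivity) hL _ hre0 hre1 hyL hyM
end

section
/- Let Λ be the subgroup of SL(2,ℤ) generated by the matrices [[1,2],[0,1]] and [[1,0],[2,1]], and set D = {z ∈ ℍ : |Re z| ≤ 1, |z − 1/2| ≥ 1/2, |z + 1/2| ≥ 1/2}. Then: (i) for every z ∈ ℍ there exists g ∈ Λ with g•z ∈ D; and (ii) if z ∈ ℍ and g ∈ Λ are such that both z and g•z lie in the interior {w ∈ ℍ : |Re w| < 1, |w − 1/2| > 1/2, |w + 1/2| > 1/2}, then g = 1. -/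
open UpperHalfPlane Matrix

/-- `u² = [[1,2],[0,1]]` in `SL(2,ℤ)`. -/
def matU2 : Matrix.SpecialLinearGroup (Fin 2) ℤ :=
  ⟨!![1, 2; 0, 1], by norm_num [Matrix.det_fin_two_of]⟩

/-- `ᵗu² = [[1,0],[2,1]]` in `SL(2,ℤ)`. -/
def matTU2 : Matrix.SpecialLinearGroup (Fin 2) ℤ :=
  ⟨!![1, 0; 2, 1], by norm_num [Matrix.det_fin_two_of]⟩

/-- The group `Λ = ⟨u², ᵗu²⟩ ≤ SL(2,ℤ)`. -/
def lambdaGroup : Subgroup (Matrix.SpecialLinearGroup (Fin 2) ℤ) :=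
  Subgroup.closure {matU2, matTU2}

/-- `z` lies in the Dirichlet domain `D = {|Re z| ≤ 1, |z ± 1/2| ≥ 1/2}`. -/
def inDomain (z : UpperHalfPlane) : Prop :=
  |(z : ℂ).re| ≤ 1 ∧ 1 / 2 ≤ ‖(z : ℂ) - 1 / 2‖ ∧
    1 / 2 ≤ ‖(z : ℂ) + 1 / 2‖

/-- `z` lies in the interior of the Dirichlet domain. -/
def inDomainInterior (z : UpperHalfPlane) : Prop :=
  |(z : ℂ).re| < 1 ∧ 1 / 2 < ‖(z : ℂ) - 1 / 2‖ ∧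
    1 / 2 < ‖(z : ℂ) + 1 / 2‖

/-- The congruence-type subgroup used as an invariant. -/
def kGroup : Subgroup (Matrix.SpecialLinearGroup (Fin 2) ℤ) where
  carrier := {g | (4:ℤ) ∣ (g.1 0 0 - 1) ∧ (4:ℤ) ∣ (g.1 1 1 - 1) ∧
      (2:ℤ) ∣ g.1 0 1 ∧ (2:ℤ) ∣ g.1 1 0}
  one_mem' := by
    simp [Matrix.SpecialLinearGroup.coe_one, Matrix.one_apply]
  mul_mem' := by
    rintro g h ⟨ha1, hd1, ⟨b1, hb1⟩, ⟨c1, hc1⟩⟩ ⟨ha2, hd2, ⟨b2, hb2⟩, ⟨c2, hc2⟩⟩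
    have e : ∀ i j, (g * h).1 i j = g.1 i 0 * h.1 0 j + g.1 i 1 * h.1 1 j := by
      intro i j
      simp [Matrix.SpecialLinearGroup.coe_mul, Matrix.mul_apply, Fin.sum_univ_two]
    refine ⟨?_, ?_, ?_, ?_⟩
    · rw [e]
      obtain ⟨x, hx⟩ := ha1; obtain ⟨y, hy⟩ := ha2
      refine ⟨x * h.1 0 0 + y + b1 * c2, ?_⟩
      have hg : g.1 0 0 = 4 * x + 1 := by linarith
      have hh : h.1 0 0 = 4 * y + 1 := by linarith
      rw [hg, hh, hb1, hc2]; ring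
    · rw [e]
      obtain ⟨x, hx⟩ := hd1; obtain ⟨y, hy⟩ := hd2
      refine ⟨c1 * b2 + x * h.1 1 1 + y, ?_⟩
      have hg : g.1 1 1 = 4 * x + 1 := by linarith
      have hh : h.1 1 1 = 4 * y + 1 := by linarith
      rw [hg, hh, hb2, hc1]; ring
    · rw [e]
      refine ⟨g.1 0 0 * b2 + b1 * h.1 1 1, ?_⟩
      rw [hb1, hb2]; ring
    · rw [e]
      refine ⟨c1 * h.1 0 0 + g.1 1 1 * c2, ?_⟩
      rw [hc1, hc2]; ring
  inv_mem' := by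
    rintro g ⟨ha, hd, hb, hc⟩
    rw [Set.mem_setOf_eq, Matrix.SpecialLinearGroup.SL2_inv_expl]
    refine ⟨hd, ha, by simpa using hb, by simpa using hc⟩

lemma lambda_le_k : lambdaGroup ≤ kGroup := by
  rw [lambdaGroup, Subgroup.closure_le]
  rintro g (rfl | rfl) <;>
    simp [kGroup, Subgroup.mem_mk] <;> simp [matU2, matTU2]


lemma real_key {x y cr dr : ℝ} (hx : |x| < 1) (hs : |x| < x^2+y^2)
    (hc : 2 ≤ |cr|) (hd : 1 ≤ |dr|) (hcd : |cr| + 1 ≤ |dr| ∨ |dr| + 1 ≤ |cr|) :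
    1 < (cr*x+dr)^2 + (cr*y)^2 := by
  have hxnn : (0:ℝ) ≤ |x| := abs_nonneg x
  rcases hcd with hcd | hcd
  · -- |dr| large : (cr x + dr)^2 alone is > 1
    have h4 : |cr*x| < |cr| := by
      rw [abs_mul]
      nlinarith
    have habs : -(|cr*x| * |dr|) ≤ cr*x*dr := by
      calc -(|cr*x| * |dr|) = -|cr*x*dr| := by rw [← abs_mul]
        _ ≤ cr*x*dr := neg_abs_le _
    have h6 : 1 < |dr| - |cr*x| := by linarith
    nlinarith [sq_abs (cr*x), sq_abs dr, sq_nonneg (cr*y), abs_nonneg (cr*x)]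
  · -- |cr| large
    have hc0 : cr ≠ 0 := by intro h; rw [h] at hc; simp at hc; linarith
    have h1 : cr^2*|x| < cr^2*(x^2+y^2) := by
      have : (0:ℝ) < cr^2 := by positivity
      exact (mul_lt_mul_iff_right₀ this).2 hs
    have h2 : -(|cr| * |dr| * |x|) ≤ cr*dr*x := by
      calc -(|cr| * |dr| * |x|) = -|cr*dr*x| := by rw [← abs_mul, ← abs_mul]
        _ ≤ cr*dr*x := neg_abs_le _
    have h3 : 1 ≤ (|cr|-|dr|)^2*|x| + dr^2*(1-|x|) := by
      have hsq : 1 ≤ (|cr|-|dr|)^2 := by nlinarith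
      have hd2 : 1 ≤ dr^2 := by nlinarith [sq_abs dr]
      nlinarith
    nlinarith [sq_abs cr, sq_abs dr]

lemma interior_facts (z : UpperHalfPlane) (hz : inDomainInterior z) :
    |(z:ℂ).re| < 1 ∧ |(z:ℂ).re| < (z:ℂ).re^2 + (z:ℂ).im^2 := by
  obtain ⟨h1, h2, h3⟩ := hz
  refine ⟨h1, ?_⟩
  have e2 : (1/2:ℝ)^2 < ‖(z:ℂ) - 1/2‖^2 := by
    have := norm_nonneg ((z:ℂ) - 1/2)
    nlinarith
  have e3 : (1/2:ℝ)^2 < ‖(z:ℂ) + 1/2‖^2 := by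
    have := norm_nonneg ((z:ℂ) + 1/2)
    nlinarith
  rw [Complex.sq_norm, Complex.normSq_apply] at e2 e3
  simp only [Complex.sub_re, Complex.sub_im, Complex.add_re, Complex.add_im] at e2 e3
  norm_num at e2 e3
  simp only [UpperHalfPlane.coe_re, UpperHalfPlane.coe_im] at *
  rcases abs_cases z.re with ⟨h, _⟩ | ⟨h, _⟩ <;> rw [h] <;> nlinarith

lemma normSq_denom_gt_one (z : UpperHalfPlane) (hz : inDomainInterior z) {c d : ℤ}
    (hc2 : (2:ℤ) ∣ c) (hc0 : c ≠ 0) (hd : ¬ (2:ℤ) ∣ d) :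
    1 < Complex.normSq ((c:ℂ) * z + d) := by
  obtain ⟨hx, hs⟩ := interior_facts z hz
  have hns : Complex.normSq ((c:ℂ) * z + d) =
      ((c:ℝ)*(z:ℂ).re+(d:ℝ))^2 + ((c:ℝ)*(z:ℂ).im)^2 := by
    rw [Complex.normSq_apply]
    simp [Complex.add_re, Complex.add_im, Complex.mul_re, Complex.mul_im]
    ring
  rw [hns]
  have hcabs : (2:ℤ) ≤ |c| := by rw [Int.abs_eq_natAbs]; omega
  have hdabs : (1:ℤ) ≤ |d| := by rw [Int.abs_eq_natAbs]; omega
  have hcd : |c| + 1 ≤ |d| ∨ |d| + 1 ≤ |c| := by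
    rw [Int.abs_eq_natAbs, Int.abs_eq_natAbs]; omega
  refine real_key hx hs ?_ ?_ ?_
  · rw [← Int.cast_abs]; exact_mod_cast hcabs
  · rw [← Int.cast_abs]; exact_mod_cast hdabs
  · rcases hcd with h | h
    · left; rw [← Int.cast_abs, ← Int.cast_abs]; exact_mod_cast h
    · right; rw [← Int.cast_abs, ← Int.cast_abs]; exact_mod_cast h

theorem test : True := trivial

lemma im_smul_eq (g : Matrix.SpecialLinearGroup (Fin 2) ℤ) (z : UpperHalfPlane) :
    (g • z).im = z.im / Complex.normSq ((g.1 1 0 : ℂ) * z + g.1 1 1) := by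
  rw [ModularGroup.im_smul_eq_div_normSq, ModularGroup.denom_apply]

theorem part2 : ∀ z : UpperHalfPlane, ∀ g ∈ lambdaGroup,
    inDomainInterior z → inDomainInterior (g • z) → g = 1 := by
  intro z g hg hz hgz
  obtain ⟨ha, hd, hb, hc⟩ := lambda_le_k hg
  by_cases hc0 : g.1 1 0 = 0
  · have hdet := g.2
    rw [Matrix.det_fin_two] at hdet
    rw [hc0, mul_zero, sub_zero] at hdet
    have ha1 : g.1 0 0 = 1 ∧ g.1 1 1 = 1 := by
      rcases Int.mul_eq_one_iff_eq_one_or_neg_one.1 hdet with ⟨h1, h2⟩ | ⟨h1, h2⟩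
      · exact ⟨h1, h2⟩
      · rw [h1] at ha; omega
    have hgT : g = ModularGroup.T ^ (g.1 0 1) := by
      ext i j
      rw [ModularGroup.coe_T_zpow]
      fin_cases i <;> fin_cases j <;> simp [ha1.1, ha1.2, hc0]
    have hre : ((ModularGroup.T ^ (g.1 0 1) • z : UpperHalfPlane) : ℂ).re
        = (z : ℂ).re + g.1 0 1 := by
      rw [UpperHalfPlane.modular_T_zpow_smul, UpperHalfPlane.coe_vadd]
      simp [Complex.add_re, add_comm]
    rw [hgT] at hgz
    have h1 := hgz.1
    rw [hre] at h1
    have hz1 := hz.1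
    have hble : |g.1 0 1| < 2 := by
      have : |((g.1 0 1 : ℤ) : ℝ)| < 2 := by
        rcases abs_cases ((g.1 0 1 : ℤ) : ℝ) with ⟨h, _⟩ | ⟨h, _⟩ <;> rw [h] <;>
          rcases abs_cases ((z:ℂ).re + (g.1 0 1 : ℤ)) with ⟨h', _⟩ | ⟨h', _⟩ <;>
          rcases abs_cases ((z:ℂ).re) with ⟨h'', _⟩ | ⟨h'', _⟩ <;> rw [h'] at h1 <;>
          rw [h''] at hz1 <;> linarith
      exact_mod_cast this
    have hb0 : g.1 0 1 = 0 := by rw [Int.abs_eq_natAbs] at hble; omega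
    rw [hgT, hb0, zpow_zero]
  · have hodd : ¬ (2:ℤ) ∣ g.1 1 1 := by omega
    have h1 : 1 < Complex.normSq ((g.1 1 0 : ℂ) * z + g.1 1 1) :=
      normSq_denom_gt_one z hz hc hc0 hodd
    have e1 : (g • z).im < z.im := by
      rw [im_smul_eq]
      exact div_lt_self z.im_pos h1
    have hinvc : (g⁻¹).1 1 0 = -g.1 1 0 := by
      rw [Matrix.SpecialLinearGroup.SL2_inv_expl]; rfl
    have hinvd : (g⁻¹).1 1 1 = g.1 0 0 := by
      rw [Matrix.SpecialLinearGroup.SL2_inv_expl]; rfl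
    have hodd' : ¬ (2:ℤ) ∣ (g⁻¹).1 1 1 := by rw [hinvd]; omega
    have hc2' : (2:ℤ) ∣ (g⁻¹).1 1 0 := by rw [hinvc]; exact dvd_neg.2 hc
    have hc0' : (g⁻¹).1 1 0 ≠ 0 := by rw [hinvc]; simpa using hc0
    have h2 : 1 < Complex.normSq (((g⁻¹).1 1 0 : ℂ) * ((g • z : UpperHalfPlane) : ℂ) + ((g⁻¹).1 1 1 : ℂ)) :=
      normSq_denom_gt_one (g • z) hgz hc2' hc0' hodd'
    have e2 : (g⁻¹ • (g • z)).im < (g • z).im := by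
      rw [im_smul_eq]
      exact div_lt_self (g • z).im_pos h2
    rw [inv_smul_smul] at e2
    linarith

lemma normSq_eval (z : UpperHalfPlane) (c d : ℤ) :
    Complex.normSq ((c:ℂ) * z + d) =
      ((c:ℝ)*(z:ℂ).re+(d:ℝ))^2 + ((c:ℝ)*(z:ℂ).im)^2 := by
  rw [Complex.normSq_apply]
  simp [Complex.add_re, Complex.add_im, Complex.mul_re, Complex.mul_im]
  ring

lemma normSq_denom_pos' (g : Matrix.SpecialLinearGroup (Fin 2) ℤ) (z : UpperHalfPlane) :
    0 < Complex.normSq ((g.1 1 0 : ℂ) * z + g.1 1 1) := by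
  have := UpperHalfPlane.normSq_denom_pos (g : GL (Fin 2) ℝ) z.im_ne_zero
  rwa [show (UpperHalfPlane.denom (↑g) z) = (g.1 1 0 : ℂ) * z + g.1 1 1 from
    ModularGroup.denom_apply g z] at this

lemma finite_small (z : UpperHalfPlane) :
    {p : ℤ × ℤ | Complex.normSq ((p.1:ℂ) * z + p.2) ≤ 1}.Finite := by
  obtain ⟨N, hN⟩ := exists_nat_ge (1 / z.im)
  obtain ⟨M, hM⟩ := exists_nat_ge (1 + N * |(z:ℂ).re|)
  apply Set.Finite.subset (Set.finite_Icc (-(N:ℤ), -(M:ℤ)) ((N:ℤ), (M:ℤ)))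
  intro p hp
  rw [Set.mem_setOf_eq, normSq_eval] at hp
  have him : 0 < (z:ℂ).im := z.2
  rw [← UpperHalfPlane.coe_im] at hN
  have h1 : |(p.1:ℝ)| * (z:ℂ).im ≤ 1 := by
    have h0 : 0 ≤ |(p.1:ℝ)| * (z:ℂ).im := by positivity
    have hsq : (|(p.1:ℝ)| * (z:ℂ).im)^2 ≤ 1 := by
      rw [mul_pow, sq_abs]; nlinarith [sq_nonneg ((p.1:ℝ)*(z:ℂ).re+(p.2:ℝ))]
    nlinarith
  have hp1 : |(p.1:ℝ)| ≤ N := by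
    rw [div_le_iff₀ him] at hN
    nlinarith [abs_nonneg (p.1:ℝ)]
  have h2 : |(p.1:ℝ)*(z:ℂ).re+(p.2:ℝ)| ≤ 1 := by
    have h0 : 0 ≤ |(p.1:ℝ)*(z:ℂ).re+(p.2:ℝ)| := abs_nonneg _
    have hsq : |(p.1:ℝ)*(z:ℂ).re+(p.2:ℝ)|^2 ≤ 1 := by
      rw [sq_abs]; nlinarith [sq_nonneg ((p.1:ℝ)*(z:ℂ).im)]
    nlinarith
  have hp2 : |(p.2:ℝ)| ≤ M := by
    have e : |(p.2:ℝ)| = |((p.1:ℝ)*(z:ℂ).re+(p.2:ℝ)) + (-((p.1:ℝ)*(z:ℂ).re))| := by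
      norm_num
    calc |(p.2:ℝ)| ≤ |(p.1:ℝ)*(z:ℂ).re+(p.2:ℝ)| + |(-((p.1:ℝ)*(z:ℂ).re))| := by
          rw [e]; exact abs_add_le _ _
      _ = |(p.1:ℝ)*(z:ℂ).re+(p.2:ℝ)| + |(p.1:ℝ)| * |(z:ℂ).re| := by
          rw [abs_neg, abs_mul]
      _ ≤ 1 + N * |(z:ℂ).re| := by gcongr
      _ ≤ M := hM
  have hp1' : |p.1| ≤ (N:ℤ) := by exact_mod_cast (by exact hp1 : (|p.1|:ℝ) ≤ (N:ℝ))
  have hp2' : |p.2| ≤ (M:ℤ) := by exact_mod_cast (by exact hp2 : (|p.2|:ℝ) ≤ (M:ℝ))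
  rw [Set.mem_Icc]
  rw [abs_le] at hp1' hp2'
  exact ⟨⟨hp1'.1, hp2'.1⟩, ⟨hp1'.2, hp2'.2⟩⟩

lemma exists_max_im_lambda (z : UpperHalfPlane) :
    ∃ g₀ ∈ lambdaGroup, ∀ g ∈ lambdaGroup, (g • z).im ≤ (g₀ • z).im := by
  classical
  set f : ℤ × ℤ → ℝ := fun p => Complex.normSq ((p.1:ℂ) * z + p.2) with hf
  set S : Set (ℤ × ℤ) :=
    {p | (∃ g ∈ lambdaGroup, g.1 1 0 = p.1 ∧ g.1 1 1 = p.2) ∧ f p ≤ 1} with hS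
  have hSfin : S.Finite := (finite_small z).subset (fun p hp => hp.2)
  have hone : ((1 : Matrix.SpecialLinearGroup (Fin 2) ℤ)).1 1 0 = 0 ∧
      ((1 : Matrix.SpecialLinearGroup (Fin 2) ℤ)).1 1 1 = 1 := by
    constructor <;> simp [Matrix.SpecialLinearGroup.coe_one, Matrix.one_apply]
  have hSne : S.Nonempty := by
    refine ⟨(0, 1), ⟨⟨1, one_mem _, hone.1, hone.2⟩, ?_⟩⟩
    simp [hf]
  obtain ⟨p₀, hp₀S, hp₀min⟩ := Set.exists_min_image S f hSfin hSne
  obtain ⟨g₀, hg₀, hrow1, hrow2⟩ := hp₀S.1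
  refine ⟨g₀, hg₀, ?_⟩
  intro g hgΛ
  rw [im_smul_eq, im_smul_eq]
  have hle : f p₀ ≤ f (g.1 1 0, g.1 1 1) := by
    by_cases h : f (g.1 1 0, g.1 1 1) ≤ 1
    · exact hp₀min _ ⟨⟨g, hgΛ, rfl, rfl⟩, h⟩
    · exact le_trans hp₀S.2 (le_of_not_ge h)
  have hpos : 0 < f p₀ := by
    rw [hf]; simp only; rw [← hrow1, ← hrow2]
    exact normSq_denom_pos' g₀ z
  have : Complex.normSq ((g₀.1 1 0 : ℂ) * z + g₀.1 1 1) = f p₀ := by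
    rw [hf]; simp only [hrow1, hrow2]
  rw [this]
  exact div_le_div_of_nonneg_left (le_of_lt z.im_pos) hpos hle

lemma matU2_mem : matU2 ∈ lambdaGroup :=
  Subgroup.subset_closure (Set.mem_insert _ _)

lemma matTU2_mem : matTU2 ∈ lambdaGroup :=
  Subgroup.subset_closure (Set.mem_insert_of_mem _ rfl)

lemma matU2_eq_T_sq : matU2 = ModularGroup.T ^ (2:ℤ) := by
  apply Subtype.ext
  rw [ModularGroup.coe_T_zpow]
  rfl

lemma matTU2_inv_row : (matTU2⁻¹).1 1 0 = -2 ∧ (matTU2⁻¹).1 1 1 = 1 := by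
  rw [Matrix.SpecialLinearGroup.SL2_inv_expl]
  constructor <;> rfl

theorem part1 : ∀ z : UpperHalfPlane, ∃ g ∈ lambdaGroup, inDomain (g • z) := by
  intro z
  obtain ⟨g₀, hg₀, hmax⟩ := exists_max_im_lambda z
  set w := g₀ • z with hw
  set n : ℤ := round ((-(w : ℂ).re) / 2) with hn
  set g₁ := matU2 ^ n * g₀ with hg₁
  have hg₁Λ : g₁ ∈ lambdaGroup := mul_mem (zpow_mem matU2_mem n) hg₀
  have hw1 : g₁ • z = ModularGroup.T ^ (2*n) • w := by
    rw [hg₁, mul_smul, ← hw, matU2_eq_T_sq, ← _root_.zpow_mul]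
  set w₁ := g₁ • z with hw₁
  have hrecoe : (w₁ : ℂ) = (w : ℂ) + (2*n : ℤ) := by
    rw [hw1, UpperHalfPlane.modular_T_zpow_smul, UpperHalfPlane.coe_vadd]
    push_cast; ring
  have hre : (w₁ : ℂ).re = (w : ℂ).re + 2*(n:ℝ) := by
    rw [hrecoe]; push_cast; simp
  have him : w₁.im = w.im := by
    rw [← UpperHalfPlane.coe_im, ← UpperHalfPlane.coe_im, hrecoe]
    simp
  have hmax₁ : ∀ g ∈ lambdaGroup, (g • z).im ≤ w₁.im := by
    intro g hgm; rw [him]; exact hmax g hgm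
  refine ⟨g₁, hg₁Λ, ?_, ?_, ?_⟩
  · -- |Re| ≤ 1
    have hround := abs_sub_round ((-(w:ℂ).re) / 2)
    rw [← hn] at hround
    have : (w₁:ℂ).re = -2 * ((-(w:ℂ).re) / 2 - n) := by rw [hre]; ring
    rw [this, abs_mul]
    rw [show |(-2:ℝ)| = 2 by norm_num]
    linarith
  · -- |w₁ - 1/2| ≥ 1/2 else matTU2⁻¹ increases im
    by_contra hcon
    push_neg at hcon
    have key : Complex.normSq (((-2:ℤ):ℂ) * w₁ + ((1:ℤ):ℂ)) < 1 := by
      have e1 : Complex.normSq (((-2:ℤ):ℂ) * w₁ + ((1:ℤ):ℂ))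
          = 4 * Complex.normSq ((w₁:ℂ) - 1/2) := by
        simp only [Complex.normSq_apply, Complex.sub_re, Complex.sub_im, Complex.add_re,
          Complex.add_im, Complex.mul_re, Complex.mul_im]
        push_cast
        norm_num
        ring
      have e2 : Complex.normSq ((w₁:ℂ) - 1/2) < 1/4 := by
        have h := Complex.sq_norm ((w₁:ℂ) - 1/2)
        nlinarith [norm_nonneg ((w₁:ℂ) - 1/2)]
      rw [e1]; linarith
    set g₂ := matTU2⁻¹ * g₁ with hg₂
    have hg₂Λ : g₂ ∈ lambdaGroup := mul_mem (inv_mem matTU2_mem) hg₁Λ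
    have him2 : (g₂ • z).im = w₁.im / Complex.normSq (((-2:ℤ):ℂ) * w₁ + ((1:ℤ):ℂ)) := by
      rw [hg₂, mul_smul, ← hw₁, im_smul_eq, matTU2_inv_row.1, matTU2_inv_row.2]
    have hgt : w₁.im < (g₂ • z).im := by
      rw [him2]
      have hpos : 0 < Complex.normSq (((-2:ℤ):ℂ) * w₁ + ((1:ℤ):ℂ)) := by
        have := normSq_denom_pos' matTU2⁻¹ w₁
        rwa [matTU2_inv_row.1, matTU2_inv_row.2] at this
      rw [lt_div_iff₀ hpos]
      nlinarith [w₁.im_pos]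
    exact absurd (hmax₁ g₂ hg₂Λ) (not_le.2 hgt)
  · -- |w₁ + 1/2| ≥ 1/2 else matTU2 increases im
    by_contra hcon
    push_neg at hcon
    have key : Complex.normSq (((2:ℤ):ℂ) * w₁ + ((1:ℤ):ℂ)) < 1 := by
      have e1 : Complex.normSq (((2:ℤ):ℂ) * w₁ + ((1:ℤ):ℂ))
          = 4 * Complex.normSq ((w₁:ℂ) + 1/2) := by
        simp only [Complex.normSq_apply, Complex.sub_re, Complex.sub_im, Complex.add_re,
          Complex.add_im, Complex.mul_re, Complex.mul_im]
        push_cast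
        norm_num
        ring
      have e2 : Complex.normSq ((w₁:ℂ) + 1/2) < 1/4 := by
        have h := Complex.sq_norm ((w₁:ℂ) + 1/2)
        nlinarith [norm_nonneg ((w₁:ℂ) + 1/2)]
      rw [e1]; linarith
    set g₂ := matTU2 * g₁ with hg₂
    have hg₂Λ : g₂ ∈ lambdaGroup := mul_mem matTU2_mem hg₁Λ
    have hrow : matTU2.1 1 0 = 2 ∧ matTU2.1 1 1 = 1 := ⟨rfl, rfl⟩
    have him2 : (g₂ • z).im = w₁.im / Complex.normSq (((2:ℤ):ℂ) * w₁ + ((1:ℤ):ℂ)) := by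
      rw [hg₂, mul_smul, ← hw₁, im_smul_eq, hrow.1, hrow.2]
    have hgt : w₁.im < (g₂ • z).im := by
      rw [him2]
      have hpos : 0 < Complex.normSq (((2:ℤ):ℂ) * w₁ + ((1:ℤ):ℂ)) := by
        have := normSq_denom_pos' matTU2 w₁
        rwa [hrow.1, hrow.2] at this
      rw [lt_div_iff₀ hpos]
      nlinarith [w₁.im_pos]
    exact absurd (hmax₁ g₂ hg₂Λ) (not_le.2 hgt)

/-- `D` is a Dirichlet fundamental domain for `Λ = ⟨u², ᵗu²⟩` (Appendix A):
every `ℍ`-point has a `Λ`-translate in `D`, and no nontrivial element of `Λ`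
maps an interior point of `D` to an interior point of `D`. -/
theorem dirichlet_fundamental_domain :
    (∀ z : UpperHalfPlane, ∃ g ∈ lambdaGroup, inDomain (g • z)) ∧
      ∀ z : UpperHalfPlane, ∀ g ∈ lambdaGroup,
        inDomainInterior z → inDomainInterior (g • z) → g = 1 := by
  exact ⟨part1, part2⟩
end
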